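/- arXiv:2301.05232 — 9 statements merged into one kernel-verified Lean document; each statement's English description precedes it below -/
import Mathlib

section
/- Let c : ℤ → A be a bi-infinite sequence over a finite alphabet A ⊆ ℤ, viewed as a formal power series c(x) = Σ_{n∈ℤ} c_n x^n. If c is annihilated by a nonzero Laurent polynomial f ∈ ℤ[x, x⁻¹] (i.e., f·c = 0 as a formal product), then c is periodic: there exists k ≥ 1 with c_{n+k} = c_n for all n ∈ ℤ. -/
/-- Extension lemma: if `g` satisfies the linear recurrence given by `f` and vanishes on a
window of length `L+1` where `L = max support - min support`, then `g` vanishes everywhere. -/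
lemma stmt5_key (f : ℤ →₀ ℤ) (hf : f.support.Nonempty) (g : ℤ → ℤ)
    (hrec : ∀ n : ℤ, ∑ u ∈ f.support, f u * g (n - u) = 0)
    (a : ℤ) (L : ℕ) (hL : f.support.max' hf - f.support.min' hf = (L : ℤ))
    (h0 : ∀ m : ℤ, a ≤ m → m ≤ a + L → g m = 0) :
    ∀ m : ℤ, g m = 0 := by
  set d := f.support.min' hf with hd
  set D := f.support.max' hf with hD
  have hdmem : d ∈ f.support := f.support.min'_mem hf
  have hDmem : D ∈ f.support := f.support.max'_mem hf
  have hfd : f d ≠ 0 := Finsupp.mem_support_iff.mp hdmem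
  have hfD : f D ≠ 0 := Finsupp.mem_support_iff.mp hDmem
  have main : ∀ j : ℕ, ∀ m : ℤ, a - j ≤ m → m ≤ a + L + j → g m = 0 := by
    intro j
    induction j with
    | zero => intro m h1 h2; exact h0 m (by omega) (by omega)
    | succ j ih =>
      intro m h1 h2
      by_cases hc1 : m ≤ a + L + j
      · by_cases hc2 : a - j ≤ m
        · exact ih m hc2 hc1
        · -- m = a - j - 1, extend leftward using u = D
          have hm : m = a - (j : ℤ) - 1 := by push_cast at h1 ⊢; omega
          have hr := hrec (m + D)
          rw [← Finset.add_sum_erase _ _ hDmem] at hr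
          have hz : ∑ u ∈ f.support.erase D, f u * g (m + D - u) = 0 := by
            apply Finset.sum_eq_zero
            intro u hu
            have hu' : u ∈ f.support := Finset.mem_of_mem_erase hu
            have h3 : d ≤ u := f.support.min'_le u hu'
            have h4 : u ≤ D := f.support.le_max' u hu'
            have h5 : u ≠ D := Finset.ne_of_mem_erase hu
            have := ih (m + D - u) (by omega) (by omega)
            rw [this, mul_zero]
          rw [hz, add_zero] at hr
          have : g (m + D - D) = 0 := by
            rcases mul_eq_zero.mp hr with h | h
            · exact absurd h hfD
            · exact h
          simpa using this
      · -- m = a + L + j + 1, extend rightward using u = d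
        have hm : m = a + (L : ℤ) + j + 1 := by push_cast at h2 ⊢; omega
        have hr := hrec (m + d)
        rw [← Finset.add_sum_erase _ _ hdmem] at hr
        have hz : ∑ u ∈ f.support.erase d, f u * g (m + d - u) = 0 := by
          apply Finset.sum_eq_zero
          intro u hu
          have hu' : u ∈ f.support := Finset.mem_of_mem_erase hu
          have h3 : d ≤ u := f.support.min'_le u hu'
          have h4 : u ≤ D := f.support.le_max' u hu'
          have h5 : u ≠ d := Finset.ne_of_mem_erase hu
          have := ih (m + d - u) (by omega) (by omega)
          rw [this, mul_zero]
        rw [hz, add_zero] at hr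
        have : g (m + d - d) = 0 := by
          rcases mul_eq_zero.mp hr with h | h
          · exact absurd h hfd
          · exact h
        simpa using this
  intro m
  exact main ((a - m).toNat + (m - (a + L)).toNat) m (by omega) (by omega)

/-- If a bi-infinite sequence `c : ℤ → ℤ` taking finitely many values is annihilated by a
nonzero Laurent polynomial `f ∈ ℤ[x,x⁻¹]` (formal product is the zero series), then `c` is
periodic. -/
theorem stmt5 (c : ℤ → ℤ) (hfin : (Set.range c).Finite) (f : ℤ →₀ ℤ) (hf : f ≠ 0)
    (hann : ∀ n : ℤ, ∑ u ∈ f.support, f u * c (n - u) = 0) :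
    ∃ k : ℕ, 1 ≤ k ∧ ∀ n : ℤ, c (n + k) = c n := by
  have hf' : f.support.Nonempty := Finsupp.support_nonempty_iff.mpr hf
  set d := f.support.min' hf' with hd
  set D := f.support.max' hf' with hD
  have hdD : d ≤ D := f.support.min'_le _ (f.support.max'_mem hf')
  set L : ℕ := (D - d).toNat with hLdef
  have hL : D - d = (L : ℤ) := by omega
  -- pigeonhole on windows of length L+1
  have hfinT : (Set.pi Set.univ (fun _ : Fin (L + 1) => Set.range c)).Finite :=
    Set.Finite.pi fun _ => hfin
  obtain ⟨n1, -, n2, -, hne, heq⟩ :=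
    Set.infinite_univ.exists_ne_map_eq_of_mapsTo
      (f := fun n : ℤ => fun i : Fin (L + 1) => c (n + (i : ℤ)))
      (fun n _ => by intro i _; exact ⟨n + (i : ℤ), rfl⟩) hfinT
  -- reduce to the ordered case
  suffices key : ∀ p q : ℤ, p < q → (∀ i : Fin (L + 1), c (p + (i : ℤ)) = c (q + (i : ℤ))) →
      ∃ k : ℕ, 1 ≤ k ∧ ∀ n : ℤ, c (n + k) = c n by
    rcases hne.lt_or_gt with h | h
    · exact key n1 n2 h (fun i => congrFun heq i)
    · exact key n2 n1 h (fun i => (congrFun heq i).symm)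
  intro p q hpq hwin
  set k : ℕ := (q - p).toNat with hk
  have hk1 : 1 ≤ k := by omega
  refine ⟨k, hk1, ?_⟩
  set g : ℤ → ℤ := fun m => c (m + k) - c m with hg
  have hrecg : ∀ n : ℤ, ∑ u ∈ f.support, f u * g (n - u) = 0 := by
    intro n
    have h1 := hann n
    have h2 := hann (n + k)
    calc ∑ u ∈ f.support, f u * g (n - u)
        = ∑ u ∈ f.support, (f u * c (n + k - u) - f u * c (n - u)) := by
          apply Finset.sum_congr rfl
          intro u _
          simp only [hg, mul_sub]
          rw [show n - u + (k : ℤ) = n + (k : ℤ) - u by ring]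
      _ = (∑ u ∈ f.support, f u * c (n + k - u)) - ∑ u ∈ f.support, f u * c (n - u) :=
          Finset.sum_sub_distrib _ _
      _ = 0 := by rw [h1, h2, sub_zero]
  have hwin' : ∀ m : ℤ, p ≤ m → m ≤ p + L → g m = 0 := by
    intro m h1 h2
    have hi : (m - p).toNat < L + 1 := by omega
    have h3 := hwin ⟨(m - p).toNat, hi⟩
    simp only [Fin.val_mk] at h3
    have hm1 : p + ((m - p).toNat : ℤ) = m := by omega
    have hm2 : q + ((m - p).toNat : ℤ) = m + k := by omega
    rw [hm1, hm2] at h3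
    simp [hg, h3]
  have := stmt5_key f hf' g hrecg p L hL hwin'
  intro n
  have := this n
  simp only [hg] at this
  omega
end

section
/- Let f ∈ ℂ[x^{±1}, y^{±1}] be a Laurent polynomial and v ∈ ℤ² a primitive vector. Then f has a line polynomial factor in direction v if and only if the normal forms of the nonzero v-fibers of f have a nonconstant common factor in ℂ[t]. -/
open Classical

/-- A line polynomial in direction `v`: a two-variable Laurent polynomial that is not a
monomial and whose support lies on a line with direction `v`. -/
def IsLinePolyDir (v : ℤ × ℤ) (φ : AddMonoidAlgebra ℂ (ℤ × ℤ)) : Prop :=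
  2 ≤ φ.coeff.support.card ∧
  ∃ u : ℤ × ℤ, ∀ w ∈ φ.coeff.support, (w.1 - u.1) * v.2 = (w.2 - u.2) * v.1

/-- The `v`-fiber of `f` through the point `u`, written as a one-variable Laurent
polynomial: its coefficient at `t^k` is the coefficient of `f` at `u + k·v`. -/
noncomputable def fiberL (f : AddMonoidAlgebra ℂ (ℤ × ℤ)) (v u : ℤ × ℤ) :
    LaurentPolynomial ℂ :=
  if h : Set.InjOn (fun k : ℤ => u + k • v) ((fun k : ℤ => u + k • v) ⁻¹' ↑f.coeff.support)
  then AddMonoidAlgebra.ofCoeff (Finsupp.comapDomain (fun k : ℤ => u + k • v) f.coeff h) else 0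

namespace Stmt10Aux

open LaurentPolynomial Polynomial

variable {v : ℤ × ℤ}

lemma line_injective (hv0 : v ≠ 0) (u : ℤ × ℤ) :
    Function.Injective (fun k : ℤ => u + k • v) := by
  intro k1 k2 h
  simp only [add_right_inj] at h
  exact smul_left_injective ℤ hv0 h

lemma fiberL_apply (hv0 : v ≠ 0) (f : AddMonoidAlgebra ℂ (ℤ × ℤ)) (u : ℤ × ℤ) (k : ℤ) :
    (fiberL f v u).coeff k = f.coeff (u + k • v) := by
  rw [fiberL, dif_pos ((line_injective hv0 u).injOn)]
  rfl

lemma fiberL_shift (hv0 : v ≠ 0) (f : AddMonoidAlgebra ℂ (ℤ × ℤ)) (u : ℤ × ℤ) (j : ℤ) :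
    fiberL f v (u + j • v) = T (-j) * fiberL f v u := by
  ext k
  rw [fiberL_apply hv0, T, AddMonoidAlgebra.coeff_single_mul_apply, fiberL_apply hv0, neg_neg,
    one_mul]
  congr 1
  rw [add_smul]
  abel

lemma fiberL_finsetSum (hv0 : v ≠ 0) {ι : Type*} (s : Finset ι)
    (h : ι → AddMonoidAlgebra ℂ (ℤ × ℤ)) (u : ℤ × ℤ) :
    fiberL (∑ i ∈ s, h i) v u = ∑ i ∈ s, fiberL (h i) v u := by
  ext k
  rw [fiberL_apply hv0, AddMonoidAlgebra.coeff_sum, Finset.sum_apply', AddMonoidAlgebra.coeff_sum,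
    Finset.sum_apply']
  exact Finset.sum_congr rfl fun i _ => (fiberL_apply hv0 (h i) u k).symm

lemma C_mul_eq_smul (c : ℂ) (q : LaurentPolynomial ℂ) : (LaurentPolynomial.C c) * q = c • q := by
  ext k
  rw [← single_eq_C, AddMonoidAlgebra.coeff_single_zero_mul, AddMonoidAlgebra.coeff_smul_apply,
    smul_eq_mul]

lemma fiberL_single_mul (hv0 : v ≠ 0) (w : ℤ × ℤ) (c : ℂ)
    (g : AddMonoidAlgebra ℂ (ℤ × ℤ)) (u : ℤ × ℤ) :
    fiberL (AddMonoidAlgebra.single w c * g) v u = c • fiberL g v (u - w) := by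
  ext k
  rw [fiberL_apply hv0, AddMonoidAlgebra.coeff_single_mul_apply, AddMonoidAlgebra.coeff_smul_apply,
    fiberL_apply hv0, smul_eq_mul]
  congr 2
  abel

noncomputable def lineEmbed (v u0 : ℤ × ℤ) (p : LaurentPolynomial ℂ) :
    AddMonoidAlgebra ℂ (ℤ × ℤ) :=
  p.coeff.sum fun i c => AddMonoidAlgebra.single (u0 + i • v) c

lemma lineEmbed_eq (v u0 : ℤ × ℤ) (p : LaurentPolynomial ℂ) :
    (lineEmbed v u0 p).coeff = Finsupp.mapDomain (fun k : ℤ => u0 + k • v) p.coeff := by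
  rw [lineEmbed, AddMonoidAlgebra.coeff_finsuppSum]
  rfl

lemma fiberL_lineMul (hv0 : v ≠ 0) (p : LaurentPolynomial ℂ) (u0 : ℤ × ℤ)
    (g : AddMonoidAlgebra ℂ (ℤ × ℤ)) (u : ℤ × ℤ) :
    fiberL (lineEmbed v u0 p * g) v u = p * fiberL g v (u - u0) := by
  classical
  have hrw : lineEmbed v u0 p * g
      = ∑ i ∈ p.coeff.support, AddMonoidAlgebra.single (u0 + i • v) (p.coeff i) * g := by
    rw [lineEmbed, Finsupp.sum, Finset.sum_mul]
  rw [hrw, fiberL_finsetSum hv0]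
  have h2 : ∀ i ∈ p.coeff.support, fiberL (AddMonoidAlgebra.single (u0 + i • v) (p.coeff i) * g) v u
      = (LaurentPolynomial.C (p.coeff i) * T i) * fiberL g v (u - u0) := by
    intro i _
    rw [fiberL_single_mul hv0]
    have huu : u - (u0 + i • v) = (u - u0) + (-i) • v := by
      rw [neg_smul]; abel
    rw [huu, fiberL_shift hv0, neg_neg, mul_assoc, C_mul_eq_smul]
  rw [Finset.sum_congr rfl h2, ← Finset.sum_mul]
  congr 1
  conv_rhs => rw [← AddMonoidAlgebra.ofCoeff_coeff p, ← Finsupp.sum_single p.coeff]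
  rw [Finsupp.sum, AddMonoidAlgebra.ofCoeff_sum]
  exact Finset.sum_congr rfl fun i _ => (single_eq_C_mul_T _ _).symm

lemma fiberL_ext (hv0 : v ≠ 0) {f g : AddMonoidAlgebra ℂ (ℤ × ℤ)}
    (h : ∀ u, fiberL f v u = fiberL g v u) : f = g := by
  ext u
  have h0 := congrArg (fun p : LaurentPolynomial ℂ => p.coeff 0) (h u)
  simpa [fiberL_apply hv0] using h0

lemma linePoly_rep (hv : IsCoprime v.1 v.2) {φ : AddMonoidAlgebra ℂ (ℤ × ℤ)}
    (hφ : IsLinePolyDir v φ) :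
    ∃ (u0 : ℤ × ℤ) (p : LaurentPolynomial ℂ),
      φ = lineEmbed v u0 p ∧ 2 ≤ p.coeff.support.card := by
  obtain ⟨hcard, u0, hline⟩ := hφ
  obtain ⟨a, b, hab⟩ := hv
  have hv0 : v ≠ 0 := by
    rintro h
    rw [h] at hab
    simp at hab
  have hline' : ∀ w, φ.coeff w ≠ 0 → ∃ k : ℤ, w = u0 + k • v := by
    intro w hne
    have hl := hline w (Finsupp.mem_support_iff.mpr hne)
    refine ⟨a * (w.1 - u0.1) + b * (w.2 - u0.2), ?_⟩
    have h1 : w.1 = u0.1 + (a * (w.1 - u0.1) + b * (w.2 - u0.2)) * v.1 := by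
      linear_combination (u0.1 - w.1) * hab + b * hl
    have h2 : w.2 = u0.2 + (a * (w.1 - u0.1) + b * (w.2 - u0.2)) * v.2 := by
      linear_combination (u0.2 - w.2) * hab + (-a) * hl
    have hco : u0 + (a * (w.1 - u0.1) + b * (w.2 - u0.2)) • v
        = (u0.1 + (a * (w.1 - u0.1) + b * (w.2 - u0.2)) * v.1,
           u0.2 + (a * (w.1 - u0.1) + b * (w.2 - u0.2)) * v.2) := rfl
    rw [hco]
    exact Prod.ext h1 h2
  refine ⟨u0, fiberL φ v u0, ?_, ?_⟩
  · rw [← AddMonoidAlgebra.coeff_inj, lineEmbed_eq]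
    ext w
    by_cases hw : ∃ k : ℤ, w = u0 + k • v
    · obtain ⟨k, rfl⟩ := hw
      rw [Finsupp.mapDomain_apply (line_injective hv0 u0), fiberL_apply hv0]
    · rw [Finsupp.mapDomain_notin_range _ _ (by
        rintro ⟨k, hk⟩
        exact hw ⟨k, hk.symm⟩)]
      by_contra hne
      exact hw (hline' w hne)
  · calc 2 ≤ φ.coeff.support.card := hcard
      _ ≤ ((fiberL φ v u0).coeff.support.image (fun k : ℤ => u0 + k • v)).card := by
          apply Finset.card_le_card
          intro w hw
          have hne := Finsupp.mem_support_iff.mp hw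
          obtain ⟨k, rfl⟩ := hline' w hne
          refine Finset.mem_image.mpr ⟨k, ?_, rfl⟩
          rw [Finsupp.mem_support_iff, fiberL_apply hv0]
          exact hne
      _ ≤ (fiberL φ v u0).coeff.support.card := Finset.card_image_le

lemma normal_form {p : LaurentPolynomial ℂ} (hp : p ≠ 0) :
    ∃ (ψ : Polynomial ℂ) (j : ℤ), ψ.coeff 0 ≠ 0 ∧ p = T j * toLaurent ψ := by
  obtain ⟨n, f', hf⟩ := p.exists_T_pow
  have hf'0 : f' ≠ 0 := by
    rintro rfl
    rw [map_zero] at hf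
    exact hp ((mul_eq_zero.mp hf.symm).resolve_right (isUnit_T n).ne_zero)
  obtain ⟨g, hg, hnd⟩ := f'.exists_eq_pow_rootMultiplicity_mul_and_not_dvd hf'0 0
  rw [Polynomial.C_0, sub_zero] at hg hnd
  refine ⟨g, (f'.rootMultiplicity 0 : ℤ) - n, fun h => hnd (Polynomial.X_dvd_iff.mpr h), ?_⟩
  have hp' : p = toLaurent f' * T (-(n : ℤ)) := by
    rw [hf, mul_assoc, ← T_add, add_neg_cancel, T_zero, mul_one]
  have hTL : toLaurent f' = T (f'.rootMultiplicity 0) * toLaurent g := by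
    conv_lhs => rw [hg]
    rw [map_mul, Polynomial.toLaurent_X_pow]
  rw [hp', hTL, T_sub]
  ring


lemma two_le_card_toLaurent {ψ : Polynomial ℂ} (h0 : ψ.coeff 0 ≠ 0) (hd : 0 < ψ.degree) :
    2 ≤ ψ.toLaurent.coeff.support.card := by
  rw [LaurentPolynomial.toLaurent_support, Finset.card_map]
  have hψ0 : ψ ≠ 0 := fun h => h0 (by rw [h, Polynomial.coeff_zero])
  refine Finset.one_lt_card.mpr ⟨0, Polynomial.mem_support_iff.mpr h0,
    ψ.natDegree, Polynomial.mem_support_iff.mpr ?_, ?_⟩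
  · exact Polynomial.leadingCoeff_ne_zero.mpr hψ0
  · have := Polynomial.natDegree_pos_iff_degree_pos.mpr hd
    omega

lemma deg_pos_of_card {ψ : Polynomial ℂ} {j : ℤ} {p : LaurentPolynomial ℂ}
    (hp : p = T j * toLaurent ψ) (hcard : 2 ≤ p.coeff.support.card) : 0 < ψ.degree := by
  by_contra h
  obtain ⟨c, hc⟩ : ∃ c, ψ = Polynomial.C c := ⟨ψ.coeff 0,
    Polynomial.eq_C_of_degree_le_zero (le_of_not_gt h)⟩
  have hps : p = AddMonoidAlgebra.single j c := by
    rw [hp, hc, Polynomial.toLaurent_C, single_eq_C_mul_T]; ring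
  have := Finset.card_le_card (show p.coeff.support ⊆ {j} by
    rw [hps]; exact Finsupp.support_single_subset)
  simp only [Finset.card_singleton] at this
  omega

end Stmt10Aux

/-- A Laurent polynomial `f ∈ ℂ[x^{±1},y^{±1}]` has a line polynomial factor in a
primitive direction `v` iff the normal forms of the nonzero `v`-fibers of `f` have a
nonconstant common factor in `ℂ[t]`. -/
theorem stmt10 (f : AddMonoidAlgebra ℂ (ℤ × ℤ)) (v : ℤ × ℤ) (hv : IsCoprime v.1 v.2) :
    (∃ φ g : AddMonoidAlgebra ℂ (ℤ × ℤ), IsLinePolyDir v φ ∧ f = φ * g) ↔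
    (∃ ψ : Polynomial ℂ, 0 < ψ.degree ∧ ψ.coeff 0 ≠ 0 ∧
      ∀ u : ℤ × ℤ, fiberL f v u ≠ 0 → Polynomial.toLaurent ψ ∣ fiberL f v u) := by
  classical
  have hv0 : v ≠ 0 := by
    rintro h
    obtain ⟨a, b, hab⟩ := hv
    rw [h] at hab
    simp at hab
  constructor
  · rintro ⟨φ, g, hφ, rfl⟩
    obtain ⟨u0, p, hrep, hcard⟩ := Stmt10Aux.linePoly_rep hv hφ
    have hp0 : p ≠ 0 := by
      intro h
      rw [h] at hcard
      simp at hcard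
    obtain ⟨ψ, j, hψ0, hpT⟩ := Stmt10Aux.normal_form hp0
    refine ⟨ψ, Stmt10Aux.deg_pos_of_card hpT hcard, hψ0, fun u _ => ?_⟩
    rw [hrep, Stmt10Aux.fiberL_lineMul hv0, hpT]
    exact ⟨LaurentPolynomial.T j * fiberL g v (u - u0), by ring⟩
  · rintro ⟨ψ, hdeg, h0, hdvd⟩
    set P := Polynomial.toLaurent ψ with hPdef
    have hP0 : P ≠ 0 := Polynomial.toLaurent_ne_zero.mpr
      (fun h => h0 (by rw [h, Polynomial.coeff_zero]))
    obtain ⟨a, b, hab⟩ := hv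
    set w : ℤ × ℤ := (-b, a) with hwdef
    have hq' : ∀ m : ℤ, ∃ qm, fiberL f v (m • w) = P * qm := by
      intro m
      by_cases h : fiberL f v (m • w) = 0
      · exact ⟨0, by rw [h, mul_zero]⟩
      · exact hdvd _ h
    choose q hq using hq'
    have hdecomp : ∀ u : ℤ × ℤ, (a * u.1 + b * u.2) • v + (v.1 * u.2 - v.2 * u.1) • w = u := by
      intro u
      have e : ((a * u.1 + b * u.2) • v + (v.1 * u.2 - v.2 * u.1) • w : ℤ × ℤ)
          = ((a * u.1 + b * u.2) * v.1 + (v.1 * u.2 - v.2 * u.1) * (-b),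
             (a * u.1 + b * u.2) * v.2 + (v.1 * u.2 - v.2 * u.1) * a) := rfl
      rw [e]
      exact Prod.ext (by linear_combination u.1 * hab) (by linear_combination u.2 * hab)
    have hKM : ∀ k m : ℤ,
        a * (m • w + k • v).1 + b * (m • w + k • v).2 = k ∧
        v.1 * (m • w + k • v).2 - v.2 * (m • w + k • v).1 = m := by
      intro k m
      have e : (m • w + k • v : ℤ × ℤ) = (m * (-b) + k * v.1, m * a + k * v.2) := rfl
      rw [e]
      constructor
      · linear_combination k * hab
      · linear_combination m * hab
    set gf : ℤ × ℤ → ℂ := fun u => (q (v.1 * u.2 - v.2 * u.1)).coeff (a * u.1 + b * u.2) with hgf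
    set S : Finset (ℤ × ℤ) := f.coeff.support.biUnion (fun u' =>
      (q (v.1 * u'.2 - v.2 * u'.1)).coeff.support.image
        (fun k => k • v + (v.1 * u'.2 - v.2 * u'.1) • w)) with hSdef
    have hS : ∀ u : ℤ × ℤ, gf u ≠ 0 → u ∈ S := by
      intro u hu
      have hq0 : q (v.1 * u.2 - v.2 * u.1) ≠ 0 := by
        intro h
        exact hu (by rw [hgf]; simp only [h, AddMonoidAlgebra.coeff_zero, Finsupp.coe_zero, Pi.zero_apply])
      have hfib : fiberL f v ((v.1 * u.2 - v.2 * u.1) • w) ≠ 0 := by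
        intro h
        rw [hq (v.1 * u.2 - v.2 * u.1)] at h
        exact hq0 ((mul_eq_zero.mp h).resolve_left hP0)
      obtain ⟨k0, hk0⟩ : ∃ k0, (fiberL f v ((v.1 * u.2 - v.2 * u.1) • w)).coeff k0 ≠ 0 := by
        by_contra hall
        push_neg at hall
        exact hfib (AddMonoidAlgebra.ext (Finsupp.ext hall))
      rw [Stmt10Aux.fiberL_apply hv0] at hk0
      refine Finset.mem_biUnion.mpr ⟨(v.1 * u.2 - v.2 * u.1) • w + k0 • v,
        Finsupp.mem_support_iff.mpr hk0, ?_⟩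
      rw [(hKM k0 (v.1 * u.2 - v.2 * u.1)).2]
      refine Finset.mem_image.mpr ⟨a * u.1 + b * u.2, Finsupp.mem_support_iff.mpr ?_, ?_⟩
      · exact fun h => hu (by rw [hgf]; exact h)
      · exact hdecomp u
    obtain ⟨g0, hg0⟩ : ∃ g0 : AddMonoidAlgebra ℂ (ℤ × ℤ), g0 = AddMonoidAlgebra.ofCoeff (Finsupp.onFinset S gf hS) :=
      ⟨AddMonoidAlgebra.ofCoeff (Finsupp.onFinset S gf hS), rfl⟩
    refine ⟨Stmt10Aux.lineEmbed v 0 P, g0, ⟨?_, 0, ?_⟩, ?_⟩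
    · rw [Stmt10Aux.lineEmbed_eq,
        Finsupp.mapDomain_support_of_injective (Stmt10Aux.line_injective hv0 0) P.coeff,
        Finset.card_image_of_injective P.coeff.support (Stmt10Aux.line_injective hv0 0)]
      exact Stmt10Aux.two_le_card_toLaurent h0 hdeg
    · intro w' hw'
      . rw [Stmt10Aux.lineEmbed_eq] at hw'
        obtain ⟨k, _, rfl⟩ := Finset.mem_image.mp (Finsupp.mapDomain_support hw')
        have e : ((0 : ℤ × ℤ) + k • v) = (k * v.1, k * v.2) := by
          refine Prod.ext ?_ ?_ <;> simp
        rw [e]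
        show (k * v.1 - (0 : ℤ × ℤ).1) * v.2 = (k * v.2 - (0 : ℤ × ℤ).2) * v.1
        show (k * v.1 - 0) * v.2 = (k * v.2 - 0) * v.1
        ring
    · apply Stmt10Aux.fiberL_ext hv0
      intro u
      have hu : u = (v.1 * u.2 - v.2 * u.1) • w + (a * u.1 + b * u.2) • v :=
        (hdecomp u).symm.trans (add_comm _ _)
      have hgfib : fiberL g0 v ((v.1 * u.2 - v.2 * u.1) • w)
          = q (v.1 * u.2 - v.2 * u.1) := by
        ext k
        rw [Stmt10Aux.fiberL_apply hv0, hg0, AddMonoidAlgebra.coeff_ofCoeff, Finsupp.onFinset_apply, hgf]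
        show (q (v.1 * ((v.1 * u.2 - v.2 * u.1) • w + k • v).2
              - v.2 * ((v.1 * u.2 - v.2 * u.1) • w + k • v).1)).coeff
            (a * ((v.1 * u.2 - v.2 * u.1) • w + k • v).1
              + b * ((v.1 * u.2 - v.2 * u.1) • w + k • v).2)
          = (q (v.1 * u.2 - v.2 * u.1)).coeff k
        rw [(hKM k (v.1 * u.2 - v.2 * u.1)).1, (hKM k (v.1 * u.2 - v.2 * u.1)).2]
      calc fiberL f v u
          = fiberL f v ((v.1 * u.2 - v.2 * u.1) • w + (a * u.1 + b * u.2) • v) := by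
            rw [← hu]
        _ = LaurentPolynomial.T (-(a * u.1 + b * u.2))
              * fiberL f v ((v.1 * u.2 - v.2 * u.1) • w) := Stmt10Aux.fiberL_shift hv0 f _ _
        _ = LaurentPolynomial.T (-(a * u.1 + b * u.2))
              * (P * q (v.1 * u.2 - v.2 * u.1)) := by rw [hq]
        _ = P * (LaurentPolynomial.T (-(a * u.1 + b * u.2))
              * q (v.1 * u.2 - v.2 * u.1)) := by ring
        _ = P * fiberL g0 v ((v.1 * u.2 - v.2 * u.1) • w + (a * u.1 + b * u.2) • v) := by
            rw [Stmt10Aux.fiberL_shift hv0, hgfib]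
        _ = P * fiberL g0 v (u - 0) := by rw [← hu, sub_zero]
        _ = fiberL (Stmt10Aux.lineEmbed v 0 P * g0) v u :=
            (Stmt10Aux.fiberL_lineMul hv0 P 0 g0 u).symm
end

section
/- If a nonzero Laurent polynomial f ∈ ℂ[x^{±1}, y^{±1}] has a line polynomial factor in primitive direction v, then the support of f has outer edges in both directions v and −v; equivalently, if the support of f has a vertex (a single extremal point) in direction v or −v, then f has no line polynomial factor in direction v. -/
/-- The dot product with `v⊥ = (v₂, −v₁)`. -/
def dotPerp (u v : ℤ × ℤ) : ℤ := u.1 * v.2 - u.2 * v.1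

/-- `D` has an outer edge in direction `v`: `D` lies in the closed half plane determined
by a line in direction `v` and contains at least two points of that line. -/
def HasOuterEdge (D : Finset (ℤ × ℤ)) (v : ℤ × ℤ) : Prop :=
  ∃ t : ℤ × ℤ, (∀ u ∈ D, 0 ≤ dotPerp (u - t) v) ∧
    2 ≤ (D.filter (fun u => dotPerp (u - t) v = 0)).card

/-- `D` has a vertex in direction `v`: `D` lies in the closed half plane determined by a
line in direction `v` and meets that line in exactly one point. -/
def HasVertex (D : Finset (ℤ × ℤ)) (v : ℤ × ℤ) : Prop :=
  ∃ t : ℤ × ℤ, (∀ u ∈ D, 0 ≤ dotPerp (u - t) v) ∧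
    (D.filter (fun u => dotPerp (u - t) v = 0)).card = 1

namespace Stmt11Aux

lemma dotPerp_sub (a b v : ℤ × ℤ) : dotPerp (a - b) v = dotPerp a v - dotPerp b v := by
  simp [dotPerp]; ring

lemma dotPerp_neg (a v : ℤ × ℤ) : dotPerp a (-v) = - dotPerp a v := by
  simp [dotPerp]; ring

/-- Key single-corner lemma: if `a₁` minimizes `q` on the support of `φ` and `b₁`
minimizes `q` on the support of `ψ`, and `p` is constant on each support with `(p,q)`
jointly injective, then `a₁ + b₁` lies in the support of `φ * ψ`. -/
lemma corner_mem (p q : ℤ × ℤ → ℤ)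
    (hq : ∀ a b, q (a + b) = q a + q b)
    (hinj : ∀ a b, p a = p b → q a = q b → a = b)
    (φ ψ : AddMonoidAlgebra ℂ (ℤ × ℤ)) (c m : ℤ)
    (hφc : ∀ a ∈ φ.coeff.support, p a = c) (hψm : ∀ b ∈ ψ.coeff.support, p b = m)
    (a₁ b₁ : ℤ × ℤ) (ha₁ : a₁ ∈ φ.coeff.support) (hb₁ : b₁ ∈ ψ.coeff.support)
    (hamin : ∀ a ∈ φ.coeff.support, q a₁ ≤ q a) (hbmin : ∀ b ∈ ψ.coeff.support, q b₁ ≤ q b) :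
    a₁ + b₁ ∈ (φ * ψ).coeff.support := by
  have key : ∀ a ∈ φ.coeff.support, ∀ b ∈ ψ.coeff.support, a + b = a₁ + b₁ → a = a₁ ∧ b = b₁ := by
    intro a ha b hb hab
    have hsum : q a + q b = q a₁ + q b₁ := by rw [← hq, ← hq, hab]
    have h1 : q a = q a₁ := by have := hamin a ha; have := hbmin b hb; omega
    have h2 : q b = q b₁ := by have := hamin a ha; have := hbmin b hb; omega
    exact ⟨hinj a a₁ (by rw [hφc a ha, hφc a₁ ha₁]) h1,
           hinj b b₁ (by rw [hψm b hb, hψm b₁ hb₁]) h2⟩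
  have hval : (φ * ψ).coeff (a₁ + b₁) = φ.coeff a₁ * ψ.coeff b₁ := by
    rw [AddMonoidAlgebra.coeff_mul, Finsupp.sum,
      Finset.sum_eq_single_of_mem a₁ ha₁ ?_]
    · rw [Finsupp.sum, Finset.sum_eq_single_of_mem b₁ hb₁ ?_]
      · simp
      · intro b hb hne
        rw [if_neg]
        intro h; exact hne (key a₁ ha₁ b hb h).2
    · intro a ha hne
      rw [Finsupp.sum]
      apply Finset.sum_eq_zero
      intro b hb
      rw [if_neg]
      intro h; exact hne (key a ha b hb h).1
  rw [Finsupp.mem_support_iff, hval]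
  exact mul_ne_zero (Finsupp.mem_support_iff.mp ha₁) (Finsupp.mem_support_iff.mp hb₁)

/-- If `φ` has at least two support points, `ψ` is nonzero, both supports lie on lines
where `p` is constant, then `φ * ψ` has at least two support points. -/
lemma prod_card (p q : ℤ × ℤ → ℤ)
    (hq : ∀ a b, q (a + b) = q a + q b)
    (hinj : ∀ a b, p a = p b → q a = q b → a = b)
    (φ ψ : AddMonoidAlgebra ℂ (ℤ × ℤ)) (c m : ℤ)
    (hφc : ∀ a ∈ φ.coeff.support, p a = c) (hψm : ∀ b ∈ ψ.coeff.support, p b = m)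
    (hφ2 : 2 ≤ φ.coeff.support.card) (hψ0 : ψ ≠ 0) :
    2 ≤ (φ * ψ).coeff.support.card := by
  have hφne : φ.coeff.support.Nonempty := Finset.card_pos.mp (by omega)
  have hψne : ψ.coeff.support.Nonempty := Finsupp.support_nonempty_iff.mpr (mt AddMonoidAlgebra.coeff_eq_zero.mp hψ0)
  obtain ⟨a₁, ha₁, hamin⟩ := Finset.exists_min_image φ.coeff.support q hφne
  obtain ⟨a₂, ha₂, hamax⟩ := Finset.exists_max_image φ.coeff.support q hφne
  obtain ⟨b₁, hb₁, hbmin⟩ := Finset.exists_min_image ψ.coeff.support q hψne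
  obtain ⟨b₂, hb₂, hbmax⟩ := Finset.exists_max_image ψ.coeff.support q hψne
  -- q a₁ < q a₂
  obtain ⟨x, hx, y, hy, hxy⟩ := Finset.one_lt_card.mp (by omega : 1 < φ.coeff.support.card)
  have hqxy : q x ≠ q y := fun h => hxy (hinj x y (by rw [hφc x hx, hφc y hy]) h)
  have haq : q a₁ < q a₂ := by
    have h1 := hamin x hx; have h2 := hamin y hy
    have h3 := hamax x hx; have h4 := hamax y hy
    omega
  have hw₁ : a₁ + b₁ ∈ (φ * ψ).coeff.support :=
    corner_mem p q hq hinj φ ψ c m hφc hψm a₁ b₁ ha₁ hb₁ hamin hbmin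
  have hw₂ : a₂ + b₂ ∈ (φ * ψ).coeff.support :=
    corner_mem p (fun u => -q u) (fun a b => show -q (a + b) = -q a + -q b by rw [hq]; ring)
      (fun a b h1 h2 => hinj a b h1 (neg_inj.mp h2)) φ ψ c m hφc hψm a₂ b₂ ha₂ hb₂
      (fun a ha => neg_le_neg (hamax a ha)) (fun b hb => neg_le_neg (hbmax b hb))
  have hne : a₁ + b₁ ≠ a₂ + b₂ := by
    intro h
    have : q (a₁ + b₁) = q (a₂ + b₂) := by rw [h]
    rw [hq, hq] at this
    have := hbmax b₁ hb₁
    omega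
  exact Finset.one_lt_card.mpr ⟨a₁ + b₁, hw₁, a₂ + b₂, hw₂, hne⟩

/-- The bottom layer (w.r.t. `p`) of `φ * g` has at least two points when `φ` is a line
polynomial (constant `p`) with at least two terms and `g ≠ 0`. -/
lemma layer (p q : ℤ × ℤ → ℤ)
    (hp : ∀ a b, p (a + b) = p a + p b)
    (hq : ∀ a b, q (a + b) = q a + q b)
    (hinj : ∀ a b, p a = p b → q a = q b → a = b)
    (φ g : AddMonoidAlgebra ℂ (ℤ × ℤ)) (c : ℤ)
    (hφc : ∀ a ∈ φ.coeff.support, p a = c) (hφ2 : 2 ≤ φ.coeff.support.card) (hg : g ≠ 0) :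
    ∃ e : ℤ, (∀ w ∈ (φ * g).coeff.support, e ≤ p w) ∧
      2 ≤ ((φ * g).coeff.support.filter (fun u => p u = e)).card := by
  classical
  have hgne : g.coeff.support.Nonempty := Finsupp.support_nonempty_iff.mpr (mt AddMonoidAlgebra.coeff_eq_zero.mp hg)
  obtain ⟨b₀, hb₀, hbmin⟩ := Finset.exists_min_image g.coeff.support p hgne
  set m := p b₀ with hm
  set ψ : AddMonoidAlgebra ℂ (ℤ × ℤ) := AddMonoidAlgebra.ofCoeff (g.coeff.filter (fun b => p b = m)) with hψdef
  have hψsupp : ∀ b, b ∈ ψ.coeff.support ↔ b ∈ g.coeff.support ∧ p b = m := by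
    intro b
    rw [hψdef, AddMonoidAlgebra.coeff_ofCoeff, Finsupp.support_filter, Finset.mem_filter]
  have hψm : ∀ b ∈ ψ.coeff.support, p b = m := fun b hb => ((hψsupp b).mp hb).2
  have hψ0 : ψ ≠ 0 := by
    rw [Ne, ← AddMonoidAlgebra.coeff_eq_zero, ← Ne, ← Finsupp.support_nonempty_iff]
    exact ⟨b₀, (hψsupp b₀).mpr ⟨hb₀, rfl⟩⟩
  set ρ : AddMonoidAlgebra ℂ (ℤ × ℤ) := g - ψ with hρdef
  have hρsupp : ∀ b ∈ ρ.coeff.support, m < p b := by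
    intro b hb
    rw [Finsupp.mem_support_iff] at hb
    have hρb : ρ.coeff b = g.coeff b - ψ.coeff b := by rw [hρdef]; rfl
    by_cases hpb : p b = m
    · exfalso
      apply hb
      simp [hρb, hψdef, AddMonoidAlgebra.coeff_ofCoeff, Finsupp.filter_apply, hpb]
    · have hgb : g.coeff b ≠ 0 := by
        intro h0
        apply hb
        simp [hρb, hψdef, AddMonoidAlgebra.coeff_ofCoeff, Finsupp.filter_apply, hpb, h0]
      have := hbmin b (Finsupp.mem_support_iff.mpr hgb)
      omega
  refine ⟨c + m, ?_, ?_⟩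
  · intro w hw
    have := AddMonoidAlgebra.support_coeff_mul_subset φ g hw
    rw [Finset.mem_add] at this
    obtain ⟨a, ha, b, hb, rfl⟩ := this
    rw [hp, hφc a ha]
    have := hbmin b hb
    omega
  · -- the coefficients on the layer p = c + m agree with φ * ψ
    have hgψρ : φ * g = φ * ψ + φ * ρ := by rw [hρdef]; ring
    have hcoeff : ∀ w, p w = c + m → (φ * g).coeff w = (φ * ψ).coeff w := by
      intro w hw
      have hzero : (φ * ρ).coeff w = 0 := by
        by_contra h0
        have hmem : w ∈ (φ * ρ).coeff.support := Finsupp.mem_support_iff.mpr h0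
        have := AddMonoidAlgebra.support_coeff_mul_subset φ ρ hmem
        rw [Finset.mem_add] at this
        obtain ⟨a, ha, b, hb, rfl⟩ := this
        rw [hp, hφc a ha] at hw
        have := hρsupp b hb
        omega
      rw [hgψρ]
      rw [AddMonoidAlgebra.coeff_add, Finsupp.add_apply, hzero, add_zero]
    have hsub : (φ * ψ).coeff.support ⊆ (φ * g).coeff.support.filter (fun u => p u = c + m) := by
      intro w hw
      have hwp : p w = c + m := by
        have := AddMonoidAlgebra.support_coeff_mul_subset φ ψ hw
        rw [Finset.mem_add] at this
        obtain ⟨a, ha, b, hb, rfl⟩ := this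
        rw [hp, hφc a ha, hψm b hb]
      rw [Finset.mem_filter]
      refine ⟨?_, hwp⟩
      rw [Finsupp.mem_support_iff, hcoeff w hwp]
      exact Finsupp.mem_support_iff.mp hw
    calc 2 ≤ (φ * ψ).coeff.support.card :=
          prod_card p q hq hinj φ ψ c m hφc hψm hφ2 hψ0
      _ ≤ _ := Finset.card_le_card hsub

/-- An outer edge and a vertex in the same direction are contradictory. -/
lemma not_edge_and_vertex (D : Finset (ℤ × ℤ)) (w : ℤ × ℤ)
    (he : HasOuterEdge D w) (hvx : HasVertex D w) : False := by
  obtain ⟨t, ht, hc⟩ := he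
  obtain ⟨t', ht', hc'⟩ := hvx
  obtain ⟨u₀, hu₀⟩ := Finset.card_pos.mp (by omega : 0 < (D.filter (fun u => dotPerp (u - t) w = 0)).card)
  obtain ⟨u₁, hu₁⟩ := Finset.card_pos.mp (by omega : 0 < (D.filter (fun u => dotPerp (u - t') w = 0)).card)
  rw [Finset.mem_filter] at hu₀ hu₁
  have e0 : dotPerp u₀ w = dotPerp t w := by have := hu₀.2; rw [dotPerp_sub] at this; omega
  have e1 : dotPerp u₁ w = dotPerp t' w := by have := hu₁.2; rw [dotPerp_sub] at this; omega
  have g0 := ht' u₀ hu₀.1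
  have g1 := ht u₁ hu₁.1
  rw [dotPerp_sub] at g0 g1
  have htt : dotPerp t w = dotPerp t' w := by omega
  have : (D.filter (fun u => dotPerp (u - t) w = 0)) =
      (D.filter (fun u => dotPerp (u - t') w = 0)) := by
    apply Finset.filter_congr
    intro u _
    rw [dotPerp_sub, dotPerp_sub]
    constructor <;> intro h <;> omega
  rw [this] at hc
  omega

end Stmt11Aux

open Stmt11Aux in
/-- If a nonzero two-variable Laurent polynomial `f` has a line polynomial factor in a
primitive direction `v`, then the support of `f` has outer edges in directions `v` and
`−v`; equivalently, if the support of `f` has a vertex in direction `v` or `−v`, then `f`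
has no line polynomial factor in direction `v`. -/
theorem stmt11 (f : AddMonoidAlgebra ℂ (ℤ × ℤ)) (v : ℤ × ℤ) (hv : IsCoprime v.1 v.2)
    (hf : f ≠ 0) :
    ((∃ φ g : AddMonoidAlgebra ℂ (ℤ × ℤ), IsLinePolyDir v φ ∧ f = φ * g) →
      HasOuterEdge f.coeff.support v ∧ HasOuterEdge f.coeff.support (-v)) ∧
    ((HasVertex f.coeff.support v ∨ HasVertex f.coeff.support (-v)) →
      ¬ ∃ φ g : AddMonoidAlgebra ℂ (ℤ × ℤ), IsLinePolyDir v φ ∧ f = φ * g) := by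
  classical
  have hvne : ¬ (v.1 = 0 ∧ v.2 = 0) := by
    rintro ⟨h1, h2⟩
    rw [h1, h2] at hv
    exact not_isCoprime_zero_zero hv
  -- the two linear functionals
  set p : ℤ × ℤ → ℤ := fun u => dotPerp u v with hpdef
  set q : ℤ × ℤ → ℤ := fun u => u.1 * v.1 + u.2 * v.2 with hqdef
  have hp : ∀ a b, p (a + b) = p a + p b := by
    intro a b; simp [hpdef, dotPerp]; ring
  have hq : ∀ a b, q (a + b) = q a + q b := by
    intro a b; simp [hqdef]; ring
  have hinj : ∀ a b : ℤ × ℤ, p a = p b → q a = q b → a = b := by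
    intro a b h1 h2
    simp only [hpdef, hqdef, dotPerp] at h1 h2
    have hvpos : 0 < v.1 * v.1 + v.2 * v.2 := by
      rcases lt_trichotomy v.1 0 with h | h | h <;> rcases lt_trichotomy v.2 0 with h' | h' | h' <;>
        first
          | nlinarith
          | (exact absurd ⟨h, h'⟩ hvne)
    have e1 : (a.1 - b.1) * (v.1 * v.1 + v.2 * v.2) = 0 := by linear_combination v.2 * h1 + v.1 * h2
    have e2 : (a.2 - b.2) * (v.1 * v.1 + v.2 * v.2) = 0 := by linear_combination v.2 * h2 - v.1 * h1
    have ha1 : a.1 = b.1 := by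
      rcases mul_eq_zero.mp e1 with h | h
      · omega
      · omega
    have ha2 : a.2 = b.2 := by
      rcases mul_eq_zero.mp e2 with h | h
      · omega
      · omega
    exact Prod.ext ha1 ha2
  have hpneg : ∀ u : ℤ × ℤ, dotPerp u (-v) = -(p u) := fun u => dotPerp_neg u v
  -- Part 1
  have part1 : (∃ φ g : AddMonoidAlgebra ℂ (ℤ × ℤ), IsLinePolyDir v φ ∧ f = φ * g) →
      HasOuterEdge f.coeff.support v ∧ HasOuterEdge f.coeff.support (-v) := by
    rintro ⟨φ, g, ⟨hφ2, u, hline⟩, rfl⟩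
    have hg : g ≠ 0 := by rintro rfl; simp at hf
    have hφc : ∀ a ∈ φ.coeff.support, p a = dotPerp u v := by
      intro a ha
      have := hline a ha
      simp only [hpdef, dotPerp]
      linarith [this]
    constructor
    · -- direction v : use functional p
      obtain ⟨e, hle, hcard⟩ := layer p q hp hq hinj φ g (dotPerp u v) hφc hφ2 hg
      obtain ⟨w₀, hw₀⟩ := Finset.card_pos.mp (by omega :
        0 < ((φ * g).coeff.support.filter (fun u => p u = e)).card)
      rw [Finset.mem_filter] at hw₀
      refine ⟨w₀, ?_, ?_⟩
      · intro x hx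
        rw [dotPerp_sub]
        have := hle x hx
        have := hw₀.2
        simp only [hpdef] at *
        omega
      · have : ((φ * g).coeff.support.filter (fun x => dotPerp (x - w₀) v = 0)) =
            ((φ * g).coeff.support.filter (fun x => p x = e)) := by
          apply Finset.filter_congr
          intro x _
          rw [dotPerp_sub]
          have := hw₀.2
          simp only [hpdef] at *
          constructor <;> intro h <;> omega
        rw [this]
        exact hcard
    · -- direction -v : use functional -p
      obtain ⟨e, hle, hcard⟩ := layer (fun u => -(p u)) q
        (fun a b => show -p (a + b) = -p a + -p b by rw [hp]; ring) hq
        (fun a b h1 h2 => hinj a b (neg_inj.mp h1) h2)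
        φ g (-(dotPerp u v)) (fun a ha => show -p a = _ by rw [hφc a ha]) hφ2 hg
      obtain ⟨w₀, hw₀⟩ := Finset.card_pos.mp (by omega :
        0 < ((φ * g).coeff.support.filter (fun u => -(p u) = e)).card)
      rw [Finset.mem_filter] at hw₀
      refine ⟨w₀, ?_, ?_⟩
      · intro x hx
        rw [dotPerp_sub, hpneg x, hpneg w₀]
        have := hle x hx
        have := hw₀.2
        simp only [hpdef] at *
        omega
      · have : ((φ * g).coeff.support.filter (fun x => dotPerp (x - w₀) (-v) = 0)) =
            ((φ * g).coeff.support.filter (fun x => -(p x) = e)) := by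
          apply Finset.filter_congr
          intro x _
          rw [dotPerp_sub, hpneg x, hpneg w₀]
          have := hw₀.2
          simp only [hpdef] at *
          constructor <;> intro h <;> omega
        rw [this]
        exact hcard
  refine ⟨part1, ?_⟩
  intro hvx hfac
  obtain ⟨hev, hemv⟩ := part1 hfac
  rcases hvx with h | h
  · exact not_edge_and_vertex f.coeff.support v hev h
  · exact not_edge_and_vertex f.coeff.support (-v) hemv h
end

section
/- Let f(x,y) = x⁻¹ + y⁻¹ + 1 − a + x + y ∈ ℂ[x^{±1}, y^{±1}] with a ∈ ℂ, a ≠ 1. Then f has no line polynomial factors. -/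
/-- A line polynomial: a Laurent polynomial in two variables (an element of the group
algebra `ℂ[ℤ²]`) that is not a monomial and whose support lies on a single line. -/
def IsLinePoly (φ : AddMonoidAlgebra ℂ (ℤ × ℤ)) : Prop :=
  2 ≤ φ.coeff.support.card ∧
  ∃ u v : ℤ × ℤ, v ≠ 0 ∧ ∀ w ∈ φ.coeff.support, (w.1 - u.1) * v.2 = (w.2 - u.2) * v.1

/-- The Laurent polynomial `x⁻¹ + y⁻¹ + (1 − a) + x + y` with `a ≠ 1` has no line
polynomial factors. -/
theorem stmt12 (a : ℂ) (ha : a ≠ 1) (φ : AddMonoidAlgebra ℂ (ℤ × ℤ)) (hφ : IsLinePoly φ) :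
    ¬ φ ∣ (AddMonoidAlgebra.single ((-1, 0) : ℤ × ℤ) 1
        + AddMonoidAlgebra.single ((0, -1) : ℤ × ℤ) 1
        + AddMonoidAlgebra.single ((0, 0) : ℤ × ℤ) (1 - a)
        + AddMonoidAlgebra.single ((1, 0) : ℤ × ℤ) 1
        + AddMonoidAlgebra.single ((0, 1) : ℤ × ℤ) 1) := by
  rintro ⟨ψ, hψ⟩
  obtain ⟨hcard, u, ⟨p, q⟩, hv, hline⟩ := hφ
  simp only at hline
  -- Bezout coefficients
  set α : ℤ := Int.gcdA p q with hα
  set β : ℤ := Int.gcdB p q with hβ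
  have hbez : p * α + q * β = Int.gcd p q := (Int.gcd_eq_gcd_ab p q).symm
  have hg0 : (Int.gcd p q : ℤ) ≠ 0 := by
    simp only [ne_eq, Nat.cast_eq_zero, Int.gcd_eq_zero_iff]
    rintro ⟨rfl, rfl⟩; exact hv rfl
  set S := φ.coeff.support with hS
  set n : ℤ × ℤ → ℤ := fun w => w.1 * α + w.2 * β with hn
  -- n is injective on S
  have hinj : ∀ w ∈ S, ∀ w' ∈ S, n w = n w' → w = w' := by
    intro w hw w' hw' hnw
    have h1 := hline w hw
    have h2 := hline w' hw'
    simp only [hn] at hnw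
    have e1 : (Int.gcd p q : ℤ) * (w.1 - w'.1) = 0 := by
      linear_combination (w.1 - w'.1) * hbez.symm + β * h1 - β * h2 + p * hnw
    have e2 : (Int.gcd p q : ℤ) * (w.2 - w'.2) = 0 := by
      linear_combination (w.2 - w'.2) * hbez.symm - α * h1 + α * h2 + q * hnw
    have e1' : w.1 = w'.1 := by
      rcases mul_eq_zero.mp e1 with h | h
      · exact absurd h hg0
      · linarith
    have e2' : w.2 = w'.2 := by
      rcases mul_eq_zero.mp e2 with h | h
      · exact absurd h hg0
      · linarith
    exact Prod.ext e1' e2'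
  have hSne : S.Nonempty := Finset.card_pos.mp (by omega)
  set T := S.image n with hT
  have hTcard : 1 < T.card := by
    rw [hT, Finset.card_image_of_injOn (fun w hw w' hw' => hinj w hw w' hw')]
    omega
  have hTne : T.Nonempty := Finset.card_pos.mp (by omega)
  set m := T.min' hTne with hm
  set M := T.max' hTne with hM
  have hmM : m < M := Finset.min'_lt_max'_of_card T hTcard
  obtain ⟨wm, hwm, hwmn⟩ := Finset.mem_image.mp (T.min'_mem hTne)
  obtain ⟨wM, hwM, hwMn⟩ := Finset.mem_image.mp (T.max'_mem hTne)
  have hmin : ∀ w ∈ S, m ≤ n w := fun w hw => T.min'_le _ (Finset.mem_image_of_mem n hw)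
  set N : ℤ × ℤ → ℕ := fun w => (n w - m).toNat with hN
  have hNval : ∀ w ∈ S, (N w : ℤ) = n w - m := by
    intro w hw; simp only [hN]; exact Int.toNat_of_nonneg (by linarith [hmin w hw])
  have hNinj : ∀ w ∈ S, ∀ w' ∈ S, N w = N w' → w = w' := by
    intro w hw w' hw' h
    apply hinj w hw w' hw'
    have := hNval w hw; have := hNval w' hw'
    omega
  set P : Polynomial ℂ := ∑ w ∈ S, Polynomial.C (φ.coeff w) * Polynomial.X ^ (N w) with hP
  have hcoeff : ∀ w₀ ∈ S, P.coeff (N w₀) = φ.coeff w₀ := by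
    intro w₀ hw₀
    rw [hP, Polynomial.finset_sum_coeff]
    rw [Finset.sum_eq_single w₀]
    · simp
    · intro w hw hne
      rw [Polynomial.coeff_C_mul, Polynomial.coeff_X_pow, if_neg, mul_zero]
      exact fun h => hne (hNinj w₀ hw₀ w hw h).symm
    · intro h; exact absurd hw₀ h
  have hcoeff0 : P.coeff 0 ≠ 0 := by
    have hNm : N wm = 0 := by simp [hN, hwmn, hm]
    rw [← hNm, hcoeff wm hwm]
    exact Finsupp.mem_support_iff.mp hwm
  have hdeg : 0 < P.degree := by
    have hNM : 0 < N wM := by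
      have := hNval wM hwM
      omega
    calc (0 : WithBot ℕ) < (N wM : ℕ) := by exact_mod_cast hNM
    _ ≤ P.degree := Polynomial.le_degree_of_ne_zero
        (by rw [hcoeff wM hwM]; exact Finsupp.mem_support_iff.mp hwM)
  obtain ⟨t₀, ht₀⟩ := Complex.exists_root hdeg
  have ht0 : t₀ ≠ 0 := by
    rintro rfl
    rw [Polynomial.IsRoot, ← Polynomial.coeff_zero_eq_eval_zero] at ht₀
    exact hcoeff0 ht₀
  set x₀ : ℂ := t₀ ^ α with hx₀
  set y₀ : ℂ := t₀ ^ β with hy₀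
  have hx : x₀ ≠ 0 := zpow_ne_zero _ ht0
  have hy : y₀ ≠ 0 := zpow_ne_zero _ ht0
  have hmono : ∀ w : ℤ × ℤ, x₀ ^ w.1 * y₀ ^ w.2 = t₀ ^ (n w) := by
    intro w
    rw [hx₀, hy₀, ← zpow_mul, ← zpow_mul, ← zpow_add₀ ht0]
    congr 1
    simp only [hn]; ring
  have hsum : ∑ w ∈ S, φ.coeff w * (x₀ ^ w.1 * y₀ ^ w.2) = 0 := by
    have : ∀ w ∈ S, φ.coeff w * (x₀ ^ w.1 * y₀ ^ w.2) = t₀ ^ m * (φ.coeff w * t₀ ^ (N w)) := by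
      intro w hw
      rw [hmono w]
      have : t₀ ^ (n w) = t₀ ^ m * t₀ ^ ((N w : ℤ)) := by
        rw [← zpow_add₀ ht0, hNval w hw]; ring_nf
      rw [this, zpow_natCast]; ring
    rw [Finset.sum_congr rfl this, ← Finset.mul_sum]
    have : ∑ w ∈ S, φ.coeff w * t₀ ^ (N w) = P.eval t₀ := by
      rw [hP, Polynomial.eval_finset_sum]
      simp
    rw [this, ht₀, mul_zero]
  -- The ring hom to Laurent polynomials in one variable
  set F : Multiplicative (ℤ × ℤ) →* AddMonoidAlgebra ℂ ℤ :=
    { toFun := fun w => AddMonoidAlgebra.single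
        (q * (Multiplicative.toAdd w).1 - p * (Multiplicative.toAdd w).2)
        (x₀ ^ (Multiplicative.toAdd w).1 * y₀ ^ (Multiplicative.toAdd w).2),
      map_one' := by
        simp only [toAdd_one, Prod.fst_zero, Prod.snd_zero, mul_zero, sub_zero, zpow_zero, one_mul]
        rfl
      map_mul' := by
        intro w w'
        rw [AddMonoidAlgebra.single_mul_single]
        have he : q * (Multiplicative.toAdd (w * w')).1 - p * (Multiplicative.toAdd (w * w')).2
            = (q * (Multiplicative.toAdd w).1 - p * (Multiplicative.toAdd w).2)
              + (q * (Multiplicative.toAdd w').1 - p * (Multiplicative.toAdd w').2) := by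
          simp only [toAdd_mul, Prod.fst_add, Prod.snd_add]; ring
        have hc : x₀ ^ (Multiplicative.toAdd (w * w')).1 * y₀ ^ (Multiplicative.toAdd (w * w')).2
            = (x₀ ^ (Multiplicative.toAdd w).1 * y₀ ^ (Multiplicative.toAdd w).2)
              * (x₀ ^ (Multiplicative.toAdd w').1 * y₀ ^ (Multiplicative.toAdd w').2) := by
          simp only [toAdd_mul, Prod.fst_add, Prod.snd_add, zpow_add₀ hx, zpow_add₀ hy]; ring
        show AddMonoidAlgebra.single
            (q * (Multiplicative.toAdd (w * w')).1 - p * (Multiplicative.toAdd (w * w')).2)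
            (x₀ ^ (Multiplicative.toAdd (w * w')).1 * y₀ ^ (Multiplicative.toAdd (w * w')).2) = _
        rw [he, hc] } with hF
  set Φ := (AddMonoidAlgebra.lift ℂ (AddMonoidAlgebra ℂ ℤ) (ℤ × ℤ)) F with hΦ
  have hΦsingle : ∀ (w : ℤ × ℤ) (c : ℂ),
      Φ (AddMonoidAlgebra.single w c)
        = AddMonoidAlgebra.single (q * w.1 - p * w.2) (c * (x₀ ^ w.1 * y₀ ^ w.2)) := by
    intro w c
    rw [hΦ, AddMonoidAlgebra.lift_single]
    show c • AddMonoidAlgebra.single _ _ = _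
    rw [AddMonoidAlgebra.smul_single']
    rfl
  have hΦφ : Φ φ = 0 := by
    have hrep : φ = ∑ w ∈ S, AddMonoidAlgebra.single w (φ.coeff w) := by
      rw [hS]
      exact (AddMonoidAlgebra.sum_coeff_single φ).symm
    rw [hrep, map_sum]
    have : ∀ w ∈ S, Φ (AddMonoidAlgebra.single w (φ.coeff w))
        = AddMonoidAlgebra.single (q * u.1 - p * u.2) (φ.coeff w * (x₀ ^ w.1 * y₀ ^ w.2)) := by
      intro w hw
      rw [hΦsingle]
      congr 1
      have := hline w hw
      linarith
    rw [Finset.sum_congr rfl this]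
    have hss : ∑ w ∈ S, AddMonoidAlgebra.single (q * u.1 - p * u.2) (φ.coeff w * (x₀ ^ w.1 * y₀ ^ w.2))
        = AddMonoidAlgebra.single (q * u.1 - p * u.2) (∑ w ∈ S, φ.coeff w * (x₀ ^ w.1 * y₀ ^ w.2)) :=
      (map_sum (AddMonoidAlgebra.singleAddHom (q * u.1 - p * u.2))
        (fun w => φ.coeff w * (x₀ ^ w.1 * y₀ ^ w.2)) S).symm
    rw [hss, hsum]
    exact AddMonoidAlgebra.single_zero _
  have hΦf : Φ (AddMonoidAlgebra.single ((-1, 0) : ℤ × ℤ) 1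
        + AddMonoidAlgebra.single ((0, -1) : ℤ × ℤ) 1
        + AddMonoidAlgebra.single ((0, 0) : ℤ × ℤ) (1 - a)
        + AddMonoidAlgebra.single ((1, 0) : ℤ × ℤ) 1
        + AddMonoidAlgebra.single ((0, 1) : ℤ × ℤ) 1) = 0 := by
    rw [hψ, map_mul, hΦφ, zero_mul]
  rw [map_add, map_add, map_add, map_add, hΦsingle, hΦsingle, hΦsingle, hΦsingle, hΦsingle]
    at hΦf
  dsimp only at hΦf
  have h2 : (AddMonoidAlgebra.single (q * -1 - p * 0) (1 * (x₀ ^ (-1 : ℤ) * y₀ ^ (0 : ℤ)))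
      + AddMonoidAlgebra.single (q * 0 - p * -1) (1 * (x₀ ^ (0 : ℤ) * y₀ ^ (-1 : ℤ)))
      + AddMonoidAlgebra.single (q * 0 - p * 0) ((1 - a) * (x₀ ^ (0 : ℤ) * y₀ ^ (0 : ℤ)))
      + AddMonoidAlgebra.single (q * 1 - p * 0) (1 * (x₀ ^ (1 : ℤ) * y₀ ^ (0 : ℤ)))
      + AddMonoidAlgebra.single (q * 0 - p * 1) (1 * (x₀ ^ (0 : ℤ) * y₀ ^ (1 : ℤ))) : AddMonoidAlgebra ℂ ℤ) = 0 := hΦf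
  by_cases hq0 : q = 0
  · have hp0 : p ≠ 0 := by
      rintro rfl; exact hv (by rw [hq0]; rfl)
    have hk := Finsupp.ext_iff.mp (congrArg AddMonoidAlgebra.coeff h2) p
    simp only [AddMonoidAlgebra.coeff_add, AddMonoidAlgebra.coeff_single, AddMonoidAlgebra.coeff_zero, Finsupp.add_apply, Finsupp.single_apply, Finsupp.coe_zero, Pi.zero_apply] at hk
    rw [if_neg (by omega), if_pos (by omega), if_neg (by omega), if_neg (by omega),
      if_neg (by omega)] at hk
    simp only [add_zero, zero_add, one_mul] at hk
    exact (mul_ne_zero (zpow_ne_zero _ hx) (zpow_ne_zero _ hy)) hk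
  · by_cases hpq : p = q ∨ p = -q
    · have hp0 : p ≠ 0 := by rcases hpq with h | h <;> omega
      have hk := Finsupp.ext_iff.mp (congrArg AddMonoidAlgebra.coeff h2) 0
      simp only [AddMonoidAlgebra.coeff_add, AddMonoidAlgebra.coeff_single, AddMonoidAlgebra.coeff_zero, Finsupp.add_apply, Finsupp.single_apply, Finsupp.coe_zero, Pi.zero_apply] at hk
      rw [if_neg (by omega), if_neg (by omega), if_pos (by omega), if_neg (by omega),
        if_neg (by omega)] at hk
      simp only [add_zero, zero_add, zpow_zero, mul_one, one_mul] at hk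
      exact ha (by linear_combination -hk)
    · push_neg at hpq
      obtain ⟨hpq1, hpq2⟩ := hpq
      have hk := Finsupp.ext_iff.mp (congrArg AddMonoidAlgebra.coeff h2) q
      simp only [AddMonoidAlgebra.coeff_add, AddMonoidAlgebra.coeff_single, AddMonoidAlgebra.coeff_zero, Finsupp.add_apply, Finsupp.single_apply, Finsupp.coe_zero, Pi.zero_apply] at hk
      rw [if_neg (by omega), if_neg (by omega), if_neg (by omega), if_pos (by omega),
        if_neg (by omega)] at hk
      simp only [add_zero, zero_add, one_mul] at hk
      exact (mul_ne_zero (zpow_ne_zero _ hx) (zpow_ne_zero _ hy)) hk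
end

section
/- Let f(x,y) = x⁻¹y⁻¹ + x⁻¹ + y⁻¹ + (1 − a) + x + y + xy ∈ ℂ[x^{±1}, y^{±1}] with a ∈ ℂ, a ≠ −1. Then f has no line polynomial factors. -/
noncomputable section AuxLinePoly

open AddMonoidAlgebra

/-- The linear form `w ↦ w.1 * q - w.2 * p` as an `AddMonoidHom`. -/
def lamHom (p q : ℤ) : ℤ × ℤ →+ ℤ where
  toFun w := w.1 * q - w.2 * p
  map_zero' := by simp
  map_add' w w' := by simp [Prod.fst_add, Prod.snd_add]; ring

@[simp] theorem lamHom_apply (p q : ℤ) (w : ℤ × ℤ) : lamHom p q w = w.1 * q - w.2 * p := rfl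

def expMonHom (X Y : ℂ) (hX : X ≠ 0) (hY : Y ≠ 0) (lam : ℤ × ℤ →+ ℤ) :
    Multiplicative (ℤ × ℤ) →* AddMonoidAlgebra ℂ ℤ where
  toFun w := AddMonoidAlgebra.single (lam w.toAdd) (X ^ w.toAdd.1 * Y ^ w.toAdd.2)
  map_one' := by
    simp only [toAdd_one, Prod.fst_zero, Prod.snd_zero, zpow_zero, one_mul, map_zero]
    exact (AddMonoidAlgebra.one_def).symm
  map_mul' w w' := by
    rw [AddMonoidAlgebra.single_mul_single]
    simp only [toAdd_mul, map_add, Prod.fst_add, Prod.snd_add, zpow_add₀ hX, zpow_add₀ hY]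
    congr 1
    ring

def evMonHom (X Y : ℂ) (hX : X ≠ 0) (hY : Y ≠ 0) : Multiplicative (ℤ × ℤ) →* ℂ where
  toFun w := X ^ w.toAdd.1 * Y ^ w.toAdd.2
  map_one' := by simp
  map_mul' w w' := by
    simp only [toAdd_mul, Prod.fst_add, Prod.snd_add, zpow_add₀ hX, zpow_add₀ hY]
    ring

def Ehom (X Y : ℂ) (hX : X ≠ 0) (hY : Y ≠ 0) (lam : ℤ × ℤ →+ ℤ) :
    AddMonoidAlgebra ℂ (ℤ × ℤ) →ₐ[ℂ] AddMonoidAlgebra ℂ ℤ :=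
  AddMonoidAlgebra.lift ℂ (AddMonoidAlgebra ℂ ℤ) (ℤ × ℤ) (expMonHom X Y hX hY lam)

def evalHom (X Y : ℂ) (hX : X ≠ 0) (hY : Y ≠ 0) :
    AddMonoidAlgebra ℂ (ℤ × ℤ) →ₐ[ℂ] ℂ :=
  AddMonoidAlgebra.lift ℂ ℂ (ℤ × ℤ) (evMonHom X Y hX hY)

theorem Ehom_single (X Y : ℂ) (hX : X ≠ 0) (hY : Y ≠ 0) (lam : ℤ × ℤ →+ ℤ)
    (w : ℤ × ℤ) (c : ℂ) :
    Ehom X Y hX hY lam (AddMonoidAlgebra.single w c)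
      = AddMonoidAlgebra.single (lam w) (c * (X ^ w.1 * Y ^ w.2)) := by
  rw [Ehom, AddMonoidAlgebra.lift_single]
  show c • (AddMonoidAlgebra.single (lam w) (X ^ w.1 * Y ^ w.2) : AddMonoidAlgebra ℂ ℤ) = _
  rw [AddMonoidAlgebra.smul_single, smul_eq_mul]

theorem evalHom_single (X Y : ℂ) (hX : X ≠ 0) (hY : Y ≠ 0) (w : ℤ × ℤ) (c : ℂ) :
    evalHom X Y hX hY (AddMonoidAlgebra.single w c) = c * (X ^ w.1 * Y ^ w.2) := by
  rw [evalHom, AddMonoidAlgebra.lift_single]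
  rfl

theorem Ehom_of_line (X Y : ℂ) (hX : X ≠ 0) (hY : Y ≠ 0) (lam : ℤ × ℤ →+ ℤ)
    (φ : AddMonoidAlgebra ℂ (ℤ × ℤ)) (n : ℤ) (h : ∀ w ∈ φ.coeff.support, lam w = n) :
    Ehom X Y hX hY lam φ = AddMonoidAlgebra.single n (evalHom X Y hX hY φ) := by
  conv_lhs => rw [← AddMonoidAlgebra.sum_coeff_single φ]
  conv_rhs => rw [← AddMonoidAlgebra.sum_coeff_single φ]
  rw [map_finsuppSum, map_finsuppSum, Finsupp.sum, Finsupp.sum]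
  exact (Finset.sum_congr rfl fun w hw => by
    rw [Ehom_single, evalHom_single, h w hw]; rfl).trans
    (map_sum (AddMonoidAlgebra.singleAddHom n)
      (fun w => evalHom X Y hX hY (AddMonoidAlgebra.single w (φ.coeff w))) φ.coeff.support).symm

theorem coeff7 {k1 k2 k3 k4 k5 k6 k7 : ℤ} {c1 c2 c3 c4 c5 c6 c7 : ℂ}
    (h : (AddMonoidAlgebra.single k1 c1 + AddMonoidAlgebra.single k2 c2
        + AddMonoidAlgebra.single k3 c3 + AddMonoidAlgebra.single k4 c4
        + AddMonoidAlgebra.single k5 c5 + AddMonoidAlgebra.single k6 c6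
        + AddMonoidAlgebra.single k7 c7 : AddMonoidAlgebra ℂ ℤ) = 0) (n : ℤ) :
    (if k1 = n then c1 else 0) + (if k2 = n then c2 else 0) + (if k3 = n then c3 else 0)
      + (if k4 = n then c4 else 0) + (if k5 = n then c5 else 0) + (if k6 = n then c6 else 0)
      + (if k7 = n then c7 else 0) = 0 := by
  have h0 : (Finsupp.single k1 c1 + Finsupp.single k2 c2
        + Finsupp.single k3 c3 + Finsupp.single k4 c4
        + Finsupp.single k5 c5 + Finsupp.single k6 c6
        + Finsupp.single k7 c7 : ℤ →₀ ℂ) = 0 := congrArg AddMonoidAlgebra.coeff h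
  have h' := Finsupp.ext_iff.mp h0 n
  simpa only [Finsupp.add_apply, Finsupp.single_apply, Finsupp.zero_apply] using h'

end AuxLinePoly

section LineZero

theorem line_zero (φ : AddMonoidAlgebra ℂ (ℤ × ℤ)) (hφ : IsLinePoly φ) :
    ∃ (p q n : ℤ) (X Y : ℂ) (hX : X ≠ 0) (hY : Y ≠ 0),
      Int.gcd p q = 1 ∧ (∀ w ∈ φ.coeff.support, lamHom p q w = n) ∧
      evalHom X Y hX hY φ = 0 := by
  obtain ⟨hcard, u, v, hv, hline⟩ := hφ
  obtain ⟨w₀, hw₀, w₁, hw₁, hne⟩ := Finset.one_lt_card.mp (lt_of_lt_of_le one_lt_two hcard)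
  have hgpos : 0 < Int.gcd v.1 v.2 := by
    rw [Int.gcd_pos_iff]
    by_contra hc
    push_neg at hc
    exact hv (Prod.ext hc.1 hc.2)
  set g : ℤ := (Int.gcd v.1 v.2 : ℤ) with hgdef
  have hgz : g ≠ 0 := Int.natCast_ne_zero.mpr hgpos.ne'
  set p : ℤ := v.1 / g with hpdef
  set q : ℤ := v.2 / g with hqdef
  have hp : p * g = v.1 := Int.ediv_mul_cancel (Int.gcd_dvd_left v.1 v.2)
  have hq : q * g = v.2 := Int.ediv_mul_cancel (Int.gcd_dvd_right v.1 v.2)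
  have hcop : Int.gcd p q = 1 := Int.gcd_div_gcd_div_gcd hgpos
  have hcross : ∀ w ∈ φ.coeff.support, (w.1 - w₀.1) * q = (w.2 - w₀.2) * p := by
    intro w hw
    have key : (w.1 - w₀.1) * v.2 = (w.2 - w₀.2) * v.1 := by
      linear_combination (hline w hw) - (hline w₀ hw₀)
    apply mul_right_cancel₀ hgz
    linear_combination key + (w.1 - w₀.1) * hq - (w.2 - w₀.2) * hp
  obtain ⟨r, s, hrs⟩ : IsCoprime p q := Int.isCoprime_iff_gcd_eq_one.mpr hcop
  set k : ℤ × ℤ → ℤ := fun w => r * (w.1 - w₀.1) + s * (w.2 - w₀.2) with hkdef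
  have hk1 : ∀ w ∈ φ.coeff.support, w.1 - w₀.1 = k w * p := by
    intro w hw
    simp only [hkdef]
    linear_combination (-(w.1 - w₀.1)) * hrs + s * (hcross w hw)
  have hk2 : ∀ w ∈ φ.coeff.support, w.2 - w₀.2 = k w * q := by
    intro w hw
    simp only [hkdef]
    linear_combination (-(w.2 - w₀.2)) * hrs + (-r) * (hcross w hw)
  have hkinj : ∀ w ∈ φ.coeff.support, ∀ w' ∈ φ.coeff.support, k w = k w' → w = w' := by
    intro w hw w' hw' hkk
    have h1 := hk1 w hw; have h2 := hk2 w hw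
    have h3 := hk1 w' hw'; have h4 := hk2 w' hw'
    rw [hkk] at h1 h2
    exact Prod.ext (by omega) (by omega)
  -- min of k over support
  have hSne : (φ.coeff.support.image k).Nonempty := ⟨k w₀, Finset.mem_image_of_mem k hw₀⟩
  set m : ℤ := (φ.coeff.support.image k).min' hSne with hmdef
  have hm_le : ∀ w ∈ φ.coeff.support, m ≤ k w := fun w hw =>
    Finset.min'_le _ _ (Finset.mem_image_of_mem k hw)
  obtain ⟨wm, hwm, hkm⟩ : ∃ w ∈ φ.coeff.support, k w = m :=
    Finset.mem_image.mp (Finset.min'_mem _ hSne)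
  set e : ℤ × ℤ → ℕ := fun w => (k w - m).toNat with hedef
  set P : Polynomial ℂ := ∑ w ∈ φ.coeff.support, Polynomial.C (φ.coeff w) * Polynomial.X ^ (e w) with hPdef
  have coeffP : ∀ w' ∈ φ.coeff.support, P.coeff (e w') = φ.coeff w' := by
    intro w' hw'
    rw [hPdef, Polynomial.finset_sum_coeff]
    rw [Finset.sum_eq_single_of_mem w' hw']
    · simp
    · intro w hw hwne
      rw [Polynomial.coeff_C_mul, Polynomial.coeff_X_pow, if_neg, mul_zero]
      intro hee
      apply hwne
      apply hkinj w hw w' hw'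
      have := hm_le w hw; have := hm_le w' hw'
      simp only [hedef] at hee
      omega
  have hP0 : P.coeff 0 ≠ 0 := by
    have hem : e wm = 0 := by simp [hedef, hkm]
    rw [← hem, coeffP wm hwm]
    exact Finsupp.mem_support_iff.mp hwm
  -- a second, nonzero exponent
  have hw' : ∃ w' ∈ φ.coeff.support, w' ≠ wm := by
    by_cases h : w₀ = wm
    · exact ⟨w₁, hw₁, fun hc => hne (by rw [h, hc])⟩
    · exact ⟨w₀, hw₀, h⟩
  obtain ⟨w', hw'mem, hw'ne⟩ := hw'
  have he' : e w' ≠ 0 := by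
    intro hc
    apply hw'ne
    apply hkinj w' hw'mem wm hwm
    have := hm_le w' hw'mem
    simp only [hedef] at hc
    omega
  have hdeg : P.degree ≠ 0 := by
    have h1 : (e w' : WithBot ℕ) ≤ P.degree :=
      Polynomial.le_degree_of_ne_zero (by rw [coeffP w' hw'mem]; exact Finsupp.mem_support_iff.mp hw'mem)
    intro hd
    rw [hd] at h1
    have : (e w' : WithBot ℕ) ≤ ((0 : ℕ) : WithBot ℕ) := by exact_mod_cast h1
    exact he' (Nat.le_zero.mp (WithBot.coe_le_coe.mp this))
  obtain ⟨t, ht⟩ := IsAlgClosed.exists_root P hdeg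
  have ht0 : t ≠ 0 := by
    intro hc
    apply hP0
    rw [Polynomial.coeff_zero_eq_eval_zero]
    subst hc
    exact ht.eq_zero
  set X : ℂ := t ^ r with hXdef
  set Y : ℂ := t ^ s with hYdef
  have hX : X ≠ 0 := zpow_ne_zero _ ht0
  have hY : Y ≠ 0 := zpow_ne_zero _ ht0
  refine ⟨p, q, lamHom p q w₀, X, Y, hX, hY, hcop, ?_, ?_⟩
  · intro w hw
    simp only [lamHom_apply]
    linear_combination (hcross w hw)
  · -- evaluate
    have hXYw : ∀ w ∈ φ.coeff.support, X ^ w.1 * Y ^ w.2 = (X ^ w₀.1 * Y ^ w₀.2 * t ^ m) * t ^ (e w) := by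
      intro w hw
      have h1 : w.1 = w₀.1 + k w * p := by have := hk1 w hw; omega
      have h2 : w.2 = w₀.2 + k w * q := by have := hk2 w hw; omega
      have hm' : (e w : ℤ) = k w - m := Int.toNat_of_nonneg (by have := hm_le w hw; omega)
      rw [h1, h2, zpow_add₀ hX, zpow_add₀ hY]
      have : X ^ (k w * p) * Y ^ (k w * q) = t ^ (k w) := by
        rw [hXdef, hYdef, ← zpow_mul, ← zpow_mul, ← zpow_add₀ ht0]
        congr 1
        linear_combination (k w) * hrs
      calc X ^ w₀.1 * X ^ (k w * p) * (Y ^ w₀.2 * Y ^ (k w * q))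
          = (X ^ w₀.1 * Y ^ w₀.2) * (X ^ (k w * p) * Y ^ (k w * q)) := by ring
        _ = (X ^ w₀.1 * Y ^ w₀.2) * t ^ (k w) := by rw [this]
        _ = (X ^ w₀.1 * Y ^ w₀.2 * t ^ m) * t ^ (e w) := by
            have h5 : t ^ (k w) = t ^ m * (t : ℂ) ^ (e w) := by
              rw [← zpow_natCast t (e w), ← zpow_add₀ ht0]
              congr 1
              omega
            rw [h5]
            ring
    have hev : evalHom X Y hX hY φ
        = (X ^ w₀.1 * Y ^ w₀.2 * t ^ m) * Polynomial.eval t P := by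
      conv_lhs => rw [← AddMonoidAlgebra.sum_coeff_single φ]
      rw [map_finsuppSum, Finsupp.sum]
      rw [hPdef, Polynomial.eval_finset_sum, Finset.mul_sum]
      refine Finset.sum_congr rfl fun w hw => ?_
      rw [evalHom_single, hXYw w hw]
      simp only [Polynomial.eval_mul, Polynomial.eval_C, Polynomial.eval_pow, Polynomial.eval_X]
      ring
    rw [hev, ht.eq_zero, mul_zero]


end LineZero

/-- The Laurent polynomial `x⁻¹y⁻¹ + x⁻¹ + y⁻¹ + (1 − a) + x + y + xy` with `a ≠ −1`
has no line polynomial factors. -/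
theorem stmt13 (a : ℂ) (ha : a ≠ -1) (φ : AddMonoidAlgebra ℂ (ℤ × ℤ)) (hφ : IsLinePoly φ) :
    ¬ φ ∣ (AddMonoidAlgebra.single ((-1, -1) : ℤ × ℤ) 1
        + AddMonoidAlgebra.single ((-1, 0) : ℤ × ℤ) 1
        + AddMonoidAlgebra.single ((0, -1) : ℤ × ℤ) 1
        + AddMonoidAlgebra.single ((0, 0) : ℤ × ℤ) (1 - a)
        + AddMonoidAlgebra.single ((1, 0) : ℤ × ℤ) 1
        + AddMonoidAlgebra.single ((0, 1) : ℤ × ℤ) 1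
        + AddMonoidAlgebra.single ((1, 1) : ℤ × ℤ) 1) := by
  rintro ⟨ψ, hfψ⟩
  obtain ⟨p, q, n, X, Y, hX, hY, hcop, hlam, hev⟩ := line_zero φ hφ
  have hEφ : Ehom X Y hX hY (lamHom p q) φ = 0 := by
    rw [Ehom_of_line X Y hX hY (lamHom p q) φ n hlam, hev]
    exact AddMonoidAlgebra.single_zero n
  have hEf : Ehom X Y hX hY (lamHom p q) (AddMonoidAlgebra.single ((-1, -1) : ℤ × ℤ) 1
        + AddMonoidAlgebra.single ((-1, 0) : ℤ × ℤ) 1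
        + AddMonoidAlgebra.single ((0, -1) : ℤ × ℤ) 1
        + AddMonoidAlgebra.single ((0, 0) : ℤ × ℤ) (1 - a)
        + AddMonoidAlgebra.single ((1, 0) : ℤ × ℤ) 1
        + AddMonoidAlgebra.single ((0, 1) : ℤ × ℤ) 1
        + AddMonoidAlgebra.single ((1, 1) : ℤ × ℤ) 1) = 0 := by
    rw [hfψ, map_mul, hEφ, zero_mul]
  simp only [map_add, Ehom_single, lamHom_apply] at hEf
  have hnot : ¬ (p = 0 ∧ q = 0) := by
    rintro ⟨rfl, rfl⟩
    simp [Int.gcd] at hcop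
  by_cases hq0 : q = 0
  · -- horizontal direction
    have hp0 : p ≠ 0 := fun h => hnot ⟨h, hq0⟩
    have e1 := coeff7 hEf p
    have e2 := coeff7 hEf 0
    rw [if_pos (by omega), if_neg (by omega), if_pos (by omega), if_neg (by omega),
        if_neg (by omega), if_neg (by omega), if_neg (by omega)] at e1
    rw [if_neg (by omega), if_pos (by omega), if_neg (by omega), if_pos (by omega),
        if_pos (by omega), if_neg (by omega), if_neg (by omega)] at e2
    simp only [one_mul, zpow_zero, zpow_neg, zpow_one, add_zero, zero_add, mul_one] at e1 e2
    field_simp at e1 e2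
    -- e1 : Y + X * Y = 0, e2 : 1 + (1 - a) * X + X * X = 0
    have hx : X = -1 := by
      have h' : Y * (1 + X) = 0 := by linear_combination Y * e1
      have h'' := (mul_eq_zero.mp h').resolve_left hY
      linear_combination h''
    apply ha
    rw [hx] at e2
    linear_combination e2
  by_cases hp0 : p = 0
  · -- vertical direction
    have e1 := coeff7 hEf (-q)
    have e2 := coeff7 hEf 0
    rw [if_pos (by omega), if_pos (by omega), if_neg (by omega), if_neg (by omega),
        if_neg (by omega), if_neg (by omega), if_neg (by omega)] at e1
    rw [if_neg (by omega), if_neg (by omega), if_pos (by omega), if_pos (by omega),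
        if_neg (by omega), if_pos (by omega), if_neg (by omega)] at e2
    simp only [one_mul, zpow_zero, zpow_neg, zpow_one, add_zero, zero_add, mul_one] at e1 e2
    field_simp at e1 e2
    -- e1 : X + X * Y = 0, e2 : 1 + (1 - a) * Y + Y * Y = 0
    have hy : Y = -1 := by
      have h' : X * (1 + Y) = 0 := by linear_combination X * e1
      have h'' := (mul_eq_zero.mp h').resolve_left hX
      linear_combination h''
    apply ha
    rw [hy] at e2
    linear_combination e2
  by_cases hpq : p = q
  · -- diagonal direction
    have e1 := coeff7 hEf p
    have e2 := coeff7 hEf 0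
    rw [if_neg (by omega), if_neg (by omega), if_pos (by omega), if_neg (by omega),
        if_pos (by omega), if_neg (by omega), if_neg (by omega)] at e1
    rw [if_pos (by omega), if_neg (by omega), if_neg (by omega), if_pos (by omega),
        if_neg (by omega), if_neg (by omega), if_pos (by omega)] at e2
    simp only [one_mul, zpow_zero, zpow_neg, zpow_one, add_zero, zero_add, mul_one] at e1 e2
    field_simp at e1 e2
    -- e1 : 1 + X * Y = 0, e2 : 1 + (1 - a) * (X * Y) + X * Y * (X * Y) = 0
    have hz : X * Y = -1 := by linear_combination e1
    apply ha
    linear_combination e2 + (a - X * Y) * hz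
  by_cases hp2q : p = 2*q
  · have e1 := coeff7 hEf p
    rw [if_neg (by omega), if_neg (by omega), if_pos (by omega), if_neg (by omega),
        if_neg (by omega), if_neg (by omega), if_neg (by omega)] at e1
    simp only [one_mul, zpow_zero, zpow_neg, zpow_one, add_zero, zero_add, mul_one] at e1
    exact hY (inv_eq_zero.mp e1)
  by_cases hq2p : q = 2*p
  · have e1 := coeff7 hEf (-q)
    rw [if_neg (by omega), if_pos (by omega), if_neg (by omega), if_neg (by omega),
        if_neg (by omega), if_neg (by omega), if_neg (by omega)] at e1
    simp only [one_mul, zpow_zero, zpow_neg, zpow_one, add_zero, zero_add, mul_one] at e1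
    exact hX (inv_eq_zero.mp e1)
  · have e1 := coeff7 hEf (p - q)
    rw [if_pos (by omega), if_neg (by omega), if_neg (by omega), if_neg (by omega),
        if_neg (by omega), if_neg (by omega), if_neg (by omega)] at e1
    simp only [one_mul, zpow_zero, zpow_neg, zpow_one, add_zero, zero_add, mul_one] at e1
    rcases mul_eq_zero.mp e1 with h | h
    · exact hX (inv_eq_zero.mp h)
    · exact hY (inv_eq_zero.mp h)
end

section
/- For every r ≥ 1 and every a ∈ ℂ with a ≠ 0, the Laurent polynomial f(x,y) = (Σ_{i=−r}^{r} Σ_{j=−r}^{r} x^i y^j) − a has no line polynomial factors. -/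
section Stmt14Aux
open Finset Polynomial
noncomputable def evalMH (s t : ℂ) (hs : s ≠ 0) (ht : t ≠ 0) :
    Multiplicative (ℤ × ℤ) →* ℂ where
  toFun w := s ^ (Multiplicative.toAdd w).1 * t ^ (Multiplicative.toAdd w).2
  map_one' := by simp
  map_mul' x y := by
    simp only [toAdd_mul, Prod.fst_add, Prod.snd_add, zpow_add₀ hs, zpow_add₀ ht]
    ring

noncomputable def ev (s t : ℂ) (hs : s ≠ 0) (ht : t ≠ 0) :
    AddMonoidAlgebra ℂ (ℤ × ℤ) →ₐ[ℂ] ℂ :=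
  AddMonoidAlgebra.lift ℂ ℂ (ℤ × ℤ) (evalMH s t hs ht)

lemma ev_single (s t : ℂ) (hs : s ≠ 0) (ht : t ≠ 0) (w : ℤ × ℤ) (c : ℂ) :
    ev s t hs ht (AddMonoidAlgebra.single w c) = c * (s ^ w.1 * t ^ w.2) := by
  rw [ev, AddMonoidAlgebra.lift_single]
  rfl

lemma exists_zpow_eq (n : ℤ) (hn : n ≠ 0) (c : ℂ) (hc : c ≠ 0) :
    ∃ t : ℂ, t ≠ 0 ∧ t ^ n = c := by
  have key : ∀ (m : ℕ), 0 < m → ∀ d : ℂ, d ≠ 0 → ∃ t : ℂ, t ≠ 0 ∧ t ^ (m : ℤ) = d := by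
    intro m hm d hd
    obtain ⟨z, hz⟩ := IsAlgClosed.exists_pow_nat_eq d hm
    refine ⟨z, ?_, by rw [zpow_natCast, hz]⟩
    rintro rfl
    exact hd (by simpa [zero_pow hm.ne'] using hz.symm)
  rcases lt_or_gt_of_ne hn with h | h
  · obtain ⟨t, ht0, ht⟩ := key (-n).toNat (by omega) c⁻¹ (inv_ne_zero hc)
    refine ⟨t, ht0, ?_⟩
    have : ((-n).toNat : ℤ) = -n := by omega
    rw [this] at ht
    have := congrArg (·⁻¹) ht
    simpa [zpow_neg] using this
  · obtain ⟨t, ht0, ht⟩ := key n.toNat (by omega) c hc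
    refine ⟨t, ht0, ?_⟩
    rwa [show (n.toNat : ℤ) = n by omega] at ht

lemma line_param (v : ℤ × ℤ) (hv : v ≠ 0) :
    ∃ a b : ℤ, ¬(a = 0 ∧ b = 0) ∧
      ∀ p q : ℤ, p * v.2 = q * v.1 → ∃ k : ℤ, p = k * a ∧ q = k * b := by
  set g : ℤ := (Int.gcd v.1 v.2 : ℤ) with hg
  have hg0 : g ≠ 0 := by
    simp only [hg, ne_eq, Nat.cast_eq_zero, Int.gcd_eq_zero_iff]
    intro ⟨h1, h2⟩; exact hv (Prod.ext h1 h2)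
  refine ⟨v.1 / g, v.2 / g, ?_, ?_⟩
  · intro ⟨h1, h2⟩
    have d1 : g ∣ v.1 := Int.gcd_dvd_left _ _
    have d2 : g ∣ v.2 := Int.gcd_dvd_right _ _
    have e1 : v.1 = 0 := by
      have := Int.ediv_mul_cancel d1
      rw [h1] at this; simpa using this.symm
    have e2 : v.2 = 0 := by
      have := Int.ediv_mul_cancel d2
      rw [h2] at this; simpa using this.symm
    exact hv (Prod.ext e1 e2)
  · intro p q hpq
    have d1 : g ∣ v.1 := Int.gcd_dvd_left _ _
    have d2 : g ∣ v.2 := Int.gcd_dvd_right _ _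
    set A := v.1 / g
    set B := v.2 / g
    have hA : v.1 = g * A := (Int.mul_ediv_cancel' d1).symm
    have hB : v.2 = g * B := (Int.mul_ediv_cancel' d2).symm
    have hcop : Int.gcd A B = 1 := by
      apply Int.gcd_div_gcd_div_gcd
      omega
    have hpAB : p * B = q * A := by
      have : p * (g * B) = q * (g * A) := by rw [← hA, ← hB]; exact hpq
      have h2 : g * (p * B) = g * (q * A) := by ring_nf; ring_nf at this; linarith
      exact mul_left_cancel₀ hg0 h2
    by_cases hA0 : A = 0
    · have hB1 : B = 1 ∨ B = -1 := by
        rw [hA0] at hcop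
        simp [Int.gcd] at hcop
        omega
      have hp0 : p = 0 := by
        rcases hB1 with h | h <;> (rw [h] at hpAB; rw [hA0] at hpAB; simp at hpAB ⊢) <;> omega
      refine ⟨q * B, by rw [hp0, hA0]; ring, ?_⟩
      rcases hB1 with h | h <;> rw [h] <;> ring
    · have hdvd : A ∣ p := by
        have : A ∣ p * B := ⟨q, by linarith [hpAB]⟩
        exact (Int.dvd_of_dvd_mul_left_of_gcd_one this hcop)
      obtain ⟨k, hk⟩ := hdvd
      refine ⟨k, by rw [hk]; ring, ?_⟩
      have : (A * k) * B = q * A := by rw [← hk]; exact hpAB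
      have h2 : A * (k * B) = A * q := by ring_nf; ring_nf at this; linarith
      have := mul_left_cancel₀ hA0 h2
      omega

lemma S_zero (r : ℕ) (ω : ℂ) (hω : ω ^ (2 * r + 1) = 1) (hω1 : ω ≠ 1) (hω0 : ω ≠ 0) :
    ∑ i ∈ Finset.Icc (-(r : ℤ)) r, ω ^ i = 0 := by
  have key : ∑ i ∈ Finset.Icc (-(r : ℤ)) r, ω ^ i
      = ∑ j ∈ Finset.range (2 * r + 1), ω ^ ((j : ℤ) - r) := by
    refine Finset.sum_nbij' (fun i => (i + r).toNat) (fun j => (j : ℤ) - r) ?_ ?_ ?_ ?_ ?_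
    · intro i hi; simp only [Finset.mem_Icc] at hi; simp only [Finset.mem_range]; omega
    · intro j hj; simp only [Finset.mem_range] at hj; simp only [Finset.mem_Icc]; omega
    · intro i hi; simp only [Finset.mem_Icc] at hi; omega
    · intro j hj; simp only [Finset.mem_range] at hj; omega
    · intro i hi
      simp only [Finset.mem_Icc] at hi
      congr 1
      omega
  rw [key]
  have : ∀ j ∈ Finset.range (2 * r + 1), ω ^ ((j : ℤ) - r) = ω ^ (-(r:ℤ)) * ω ^ j := by
    intro j _
    rw [show (j : ℤ) - r = -(r:ℤ) + j by ring, zpow_add₀ hω0, zpow_natCast]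
  rw [Finset.sum_congr rfl this, ← Finset.mul_sum]
  rw [geom_sum_eq hω1, hω]
  simp

lemma exists_root_combo (S : Finset (ℤ × ℤ)) (c : (ℤ × ℤ) → ℂ) (hc : ∀ w ∈ S, c w ≠ 0)
    (k : (ℤ × ℤ) → ℤ) (hkinj : ∀ w ∈ S, ∀ w' ∈ S, k w = k w' → w = w')
    (h2 : 2 ≤ S.card) :
    ∃ z : ℂ, z ≠ 0 ∧ ∑ w ∈ S, c w * z ^ (k w) = 0 := by
  have hne : (S.image k).Nonempty := by
    rw [Finset.image_nonempty]
    exact Finset.card_pos.mp (by omega)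
  set m : ℤ := (S.image k).min' hne with hm
  obtain ⟨wm, hwmS, hwm⟩ : ∃ wm ∈ S, k wm = m := by
    have := (S.image k).min'_mem hne
    rw [Finset.mem_image] at this
    obtain ⟨w, hw, hkw⟩ := this
    exact ⟨w, hw, hkw⟩
  have hmle : ∀ w ∈ S, m ≤ k w := fun w hw =>
    (S.image k).min'_le _ (Finset.mem_image_of_mem k hw)
  set q : Polynomial ℂ := ∑ w ∈ S, Polynomial.C (c w) * Polynomial.X ^ (k w - m).toNat with hq
  have hcoeff : ∀ n : ℕ, q.coeff n = ∑ w ∈ S, (if n = (k w - m).toNat then c w else 0) := by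
    intro n
    rw [hq, Polynomial.finset_sum_coeff]
    refine Finset.sum_congr rfl fun w hw => ?_
    rw [Polynomial.coeff_C_mul, Polynomial.coeff_X_pow]
    split <;> simp_all
  have hunique : ∀ w ∈ S, ∀ w' ∈ S, (k w - m).toNat = (k w' - m).toNat → w = w' := by
    intro w hw w' hw' h
    exact hkinj w hw w' hw' (by have := hmle w hw; have := hmle w' hw'; omega)
  have hcoeff_eq : ∀ w ∈ S, q.coeff ((k w - m).toNat) = c w := by
    intro w hw
    rw [hcoeff]
    rw [Finset.sum_eq_single w]
    · simp
    · intro w' hw' hne'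
      split
      · exact absurd (hunique w' hw' w hw (by omega)) hne'
      · rfl
    · intro h; exact absurd hw h
  have hc0 : q.coeff 0 = c wm := by
    have := hcoeff_eq wm hwmS
    rwa [hwm, sub_self, Int.toNat_zero] at this
  obtain ⟨w', hw'S, hw'ne⟩ : ∃ w' ∈ S, w' ≠ wm := by
    obtain ⟨x, hx, y, hy, hxy⟩ := Finset.one_lt_card.mp (lt_of_lt_of_le one_lt_two h2)
    by_cases h : x = wm
    · exact ⟨y, hy, by rw [← h]; exact hxy.symm⟩
    · exact ⟨x, hx, h⟩
  have hkw' : m < k w' := by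
    have h1 := hmle w' hw'S
    rcases lt_or_eq_of_le h1 with h | h
    · exact h
    · exact absurd (hkinj w' hw'S wm hwmS (by rw [hwm, ← h])) hw'ne
  have hdeg : 0 < q.degree := by
    have h1 : q.coeff ((k w' - m).toNat) ≠ 0 := by
      rw [hcoeff_eq w' hw'S]; exact hc w' hw'S
    have h2 : ((k w' - m).toNat : WithBot ℕ) ≤ q.degree := Polynomial.le_degree_of_ne_zero h1
    have h3 : (1 : WithBot ℕ) ≤ ((k w' - m).toNat : WithBot ℕ) := by
      exact_mod_cast Nat.one_le_cast.mpr (by omega : 1 ≤ (k w' - m).toNat)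
    calc (0 : WithBot ℕ) < 1 := by norm_num
      _ ≤ _ := le_trans h3 h2
  obtain ⟨z, hz⟩ := Complex.exists_root hdeg
  have hz0 : z ≠ 0 := by
    rintro rfl
    rw [Polynomial.IsRoot, ← Polynomial.coeff_zero_eq_eval_zero, hc0] at hz
    exact hc wm hwmS hz
  refine ⟨z, hz0, ?_⟩
  have : ∑ w ∈ S, c w * z ^ (k w) = z ^ m * q.eval z := by
    rw [hq, Polynomial.eval_finset_sum, Finset.mul_sum]
    refine Finset.sum_congr rfl fun w hw => ?_
    rw [Polynomial.eval_mul, Polynomial.eval_C, Polynomial.eval_pow, Polynomial.eval_X]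
    rw [← zpow_natCast z ((k w - m).toNat), Int.toNat_of_nonneg (by linarith [hmle w hw])]
    rw [← mul_assoc, mul_comm (z ^ m) (c w), mul_assoc, ← zpow_add₀ hz0]
    congr 2
    ring
  rw [this, Polynomial.IsRoot.eq_zero hz, mul_zero]

end Stmt14Aux


/-- For `r ≥ 1` and `a ≠ 0`, the Laurent polynomial `(Σ_{|i|≤r, |j|≤r} x^i y^j) − a`
(the king grid `r`-neighborhood polynomial) has no line polynomial factors. -/
theorem stmt14 (r : ℕ) (hr : 1 ≤ r) (a : ℂ) (ha : a ≠ 0)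
    (φ : AddMonoidAlgebra ℂ (ℤ × ℤ)) (hφ : IsLinePoly φ) :
    ¬ φ ∣ ((∑ i ∈ Finset.Icc (-(r : ℤ)) r, ∑ j ∈ Finset.Icc (-(r : ℤ)) r,
          AddMonoidAlgebra.single ((i, j) : ℤ × ℤ) (1 : ℂ))
        - AddMonoidAlgebra.single ((0, 0) : ℤ × ℤ) a) := by
  obtain ⟨hcard, u, v, hv, hline⟩ := hφ
  obtain ⟨A, B, hAB, hparam⟩ := line_param v hv
  obtain ⟨w0, hw0⟩ : ∃ w0, w0 ∈ φ.coeff.support :=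
    Finset.Nonempty.exists_mem (Finset.card_pos.mp (by omega))
  -- the integer parameter along the line
  set k : (ℤ × ℤ) → ℤ := fun w => if A = 0 then (w.2 - w0.2) / B else (w.1 - w0.1) / A with hkdef
  have hk : ∀ w ∈ φ.coeff.support, w.1 - w0.1 = k w * A ∧ w.2 - w0.2 = k w * B := by
    intro w hw
    have h1 := hline w hw
    have h2 := hline w0 hw0
    have h3 : (w.1 - w0.1) * v.2 = (w.2 - w0.2) * v.1 := by ring_nf; ring_nf at h1 h2; linarith
    obtain ⟨k', hp, hq⟩ := hparam _ _ h3
    have hkw : k w = k' := by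
      rw [hkdef]
      by_cases hA : A = 0
      · have hB : B ≠ 0 := fun hB => hAB ⟨hA, hB⟩
        simp only [hA, if_true]
        rw [hq, Int.mul_ediv_cancel _ hB]
      · simp only [hA, if_false]
        rw [hp, Int.mul_ediv_cancel _ hA]
    rw [hkw]; exact ⟨hp, hq⟩
  have hkinj : ∀ w ∈ φ.coeff.support, ∀ w' ∈ φ.coeff.support, k w = k w' → w = w' := by
    intro w hw w' hw' h
    obtain ⟨h1, h2⟩ := hk w hw
    obtain ⟨h3, h4⟩ := hk w' hw'
    have : w.1 = w'.1 := by rw [h] at h1; omega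
    have : w.2 = w'.2 := by rw [h] at h2; omega
    exact Prod.ext ‹w.1 = w'.1› ‹w.2 = w'.2›
  obtain ⟨z, hz0, hzsum⟩ := exists_root_combo φ.coeff.support φ.coeff
    (fun w hw => Finsupp.mem_support_iff.mp hw) k hkinj hcard
  -- a nontrivial (2r+1)-th root of unity
  obtain ⟨ω, hωprim⟩ : ∃ ω : ℂ, IsPrimitiveRoot ω (2 * r + 1) :=
    ⟨_, Complex.isPrimitiveRoot_exp (2 * r + 1) (by omega)⟩
  have hωpow : ω ^ (2 * r + 1) = 1 := hωprim.pow_eq_one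
  have hω1 : ω ≠ 1 := hωprim.ne_one (by omega)
  have hω0 : ω ≠ 0 := fun h => by simp [h, zero_pow] at hωpow
  -- choose s, t with s^A * t^B = z and one of the geometric sums vanishing
  obtain ⟨s, t, hs0, ht0, hst, hSzero⟩ :
      ∃ s t : ℂ, s ≠ 0 ∧ t ≠ 0 ∧ s ^ A * t ^ B = z ∧
        (∑ i ∈ Finset.Icc (-(r : ℤ)) r, s ^ i) * (∑ j ∈ Finset.Icc (-(r : ℤ)) r, t ^ j) = 0 := by
    by_cases hB : B = 0
    · have hA : A ≠ 0 := fun hA => hAB ⟨hA, hB⟩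
      obtain ⟨s, hs0, hsA⟩ := exists_zpow_eq A hA z hz0
      refine ⟨s, ω, hs0, hω0, by rw [hsA, hB, zpow_zero, mul_one], ?_⟩
      rw [S_zero r ω hωpow hω1 hω0, mul_zero]
    · obtain ⟨t, ht0, htB⟩ := exists_zpow_eq B hB (z / ω ^ A) (by
        exact div_ne_zero hz0 (zpow_ne_zero A hω0))
      refine ⟨ω, t, hω0, ht0, ?_, ?_⟩
      · rw [htB, mul_comm, div_mul_cancel₀ z (zpow_ne_zero A hω0)]
      · rw [S_zero r ω hωpow hω1 hω0, zero_mul]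
  -- the evaluation
  set E := ev s t hs0 ht0 with hE
  intro hdvd
  obtain ⟨ψ, hψ⟩ := hdvd
  have hEφ : E φ = 0 := by
    have hrepr : φ = ∑ w ∈ φ.coeff.support, AddMonoidAlgebra.single w (φ.coeff w) := by
      exact (AddMonoidAlgebra.sum_coeff_single φ).symm
    have : E φ = ∑ w ∈ φ.coeff.support, φ.coeff w * (s ^ w.1 * t ^ w.2) := by
      conv_lhs => rw [hrepr]
      rw [map_sum]
      exact Finset.sum_congr rfl fun w _ => ev_single s t hs0 ht0 w (φ.coeff w)
    rw [this]
    have heval : ∀ w ∈ φ.coeff.support,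
        φ.coeff w * (s ^ w.1 * t ^ w.2) = (s ^ w0.1 * t ^ w0.2) * (φ.coeff w * z ^ (k w)) := by
      intro w hw
      obtain ⟨h1, h2⟩ := hk w hw
      have e1 : w.1 = w0.1 + A * k w := by linarith [h1]
      have e2 : w.2 = w0.2 + B * k w := by linarith [h2]
      rw [e1, e2, zpow_add₀ hs0, zpow_add₀ ht0, zpow_mul, zpow_mul, ← hst, mul_zpow]
      ring
    rw [Finset.sum_congr rfl heval, ← Finset.mul_sum, hzsum, mul_zero]
  have hEf : E ((∑ i ∈ Finset.Icc (-(r : ℤ)) r, ∑ j ∈ Finset.Icc (-(r : ℤ)) r,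
          AddMonoidAlgebra.single ((i, j) : ℤ × ℤ) (1 : ℂ))
        - AddMonoidAlgebra.single ((0, 0) : ℤ × ℤ) a) = -a := by
    rw [map_sub, map_sum]
    have h1 : ∀ i ∈ Finset.Icc (-(r : ℤ)) r,
        E (∑ j ∈ Finset.Icc (-(r : ℤ)) r, AddMonoidAlgebra.single ((i, j) : ℤ × ℤ) (1 : ℂ))
          = ∑ j ∈ Finset.Icc (-(r : ℤ)) r, s ^ i * t ^ j := by
      intro i _
      rw [map_sum]
      refine Finset.sum_congr rfl fun j _ => ?_
      rw [hE, ev_single]; simp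
    rw [Finset.sum_congr rfl h1, hE, ev_single]
    simp only [zpow_zero, mul_one, one_mul]
    rw [← Finset.sum_mul_sum, hSzero]
    ring
  rw [hψ, map_mul, hEφ, zero_mul] at hEf
  exact ha (by linear_combination hEf)
end

section
/- For every r ≥ 2 and every a ∈ ℂ, the Laurent polynomial f(x,y) = (Σ_{|i|+|j| ≤ r} x^i y^j) − a has no line polynomial factors. -/
open AddMonoidAlgebra

noncomputable def Fmap (x0 y0 : ℂˣ) (W : ℤ × ℤ) :
    Multiplicative (ℤ × ℤ) →* AddMonoidAlgebra ℂ ℤ where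
  toFun := fun g =>
      AddMonoidAlgebra.single ((Multiplicative.toAdd g).1 * W.1 + (Multiplicative.toAdd g).2 * W.2)
        (((x0 ^ (Multiplicative.toAdd g).1 * y0 ^ (Multiplicative.toAdd g).2 : ℂˣ) : ℂ))
  map_one' := by
    simp only [toAdd_one, Prod.fst_zero, Prod.snd_zero, zero_mul, zpow_zero, one_mul,
      zero_add, Units.val_one, AddMonoidAlgebra.one_def]
  map_mul' := by
    intro g h
    rw [AddMonoidAlgebra.single_mul_single]
    have he : Multiplicative.toAdd (g * h) = Multiplicative.toAdd g + Multiplicative.toAdd h := rfl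
    congr 1
    · rw [he]; simp only [Prod.fst_add, Prod.snd_add]; ring
    · rw [he]; push_cast [zpow_add, Prod.fst_add, Prod.snd_add]; ring

noncomputable def Emap (x0 y0 : ℂˣ) (W : ℤ × ℤ) :
    AddMonoidAlgebra ℂ (ℤ × ℤ) →ₐ[ℂ] AddMonoidAlgebra ℂ ℤ :=
  AddMonoidAlgebra.lift ℂ _ (ℤ × ℤ) (Fmap x0 y0 W)

theorem Emap_single (x0 y0 : ℂˣ) (W : ℤ × ℤ) (w : ℤ × ℤ) (b : ℂ) :
    Emap x0 y0 W (AddMonoidAlgebra.single w b)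
      = AddMonoidAlgebra.single (w.1 * W.1 + w.2 * W.2)
          (b * ((x0 ^ w.1 * y0 ^ w.2 : ℂˣ) : ℂ)) := by
  rw [Emap, AddMonoidAlgebra.lift_single]
  have : Fmap x0 y0 W (Multiplicative.ofAdd w)
      = AddMonoidAlgebra.single (w.1 * W.1 + w.2 * W.2) ((x0 ^ w.1 * y0 ^ w.2 : ℂˣ) : ℂ) := rfl
  rw [this, AddMonoidAlgebra.smul_single']

lemma two_coeffs_root (Q : Polynomial ℂ) (e1 e2 : ℕ) (h12 : e1 ≠ e2)
    (h1 : Q.coeff e1 ≠ 0) (h2 : Q.coeff e2 ≠ 0) :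
    ∃ c : ℂ, c ≠ 0 ∧ Q.eval c = 0 := by
  have hQ0 : Q ≠ 0 := fun h => h1 (by simp [h])
  set n := Q.natTrailingDegree with hn
  obtain ⟨R, hR⟩ : Polynomial.X ^ n ∣ Q := by
    rw [Polynomial.X_pow_dvd_iff]
    intro d hd
    exact Polynomial.coeff_eq_zero_of_lt_natTrailingDegree hd
  have hR0 : R.coeff 0 ≠ 0 := by
    have hc : Q.coeff n = R.coeff 0 := by
      rw [hR]
      simpa using Polynomial.coeff_X_pow_mul R n 0
    rw [← hc]
    exact Polynomial.trailingCoeff_nonzero_iff_nonzero.2 hQ0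
  have hRne : R ≠ 0 := fun h => hR0 (by simp [h])
  have hdeg : n < Q.natDegree := by
    rcases Nat.lt_or_ge e1 e2 with h | h
    · exact lt_of_le_of_lt (Polynomial.natTrailingDegree_le_of_ne_zero h1)
        (lt_of_lt_of_le h (Polynomial.le_natDegree_of_ne_zero h2))
    · have h' : e2 < e1 := by omega
      exact lt_of_le_of_lt (Polynomial.natTrailingDegree_le_of_ne_zero h2)
        (lt_of_lt_of_le h' (Polynomial.le_natDegree_of_ne_zero h1))
  have hndeg : Q.natDegree = n + R.natDegree := by
    rw [hR, Polynomial.natDegree_mul (pow_ne_zero n Polynomial.X_ne_zero) hRne,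
      Polynomial.natDegree_X_pow]
  have hRdeg : 0 < R.natDegree := by omega
  obtain ⟨c, hc⟩ := Complex.exists_root (Polynomial.natDegree_pos_iff_degree_pos.1 hRdeg)
  refine ⟨c, ?_, ?_⟩
  · intro h0
    apply hR0
    subst h0
    rw [Polynomial.coeff_zero_eq_eval_zero]
    exact hc
  · rw [hR]
    simp [hc.eq_zero]

lemma line_param_s15 (d : ℤ × ℤ) (hd : Int.gcd d.1 d.2 = 1) (z : ℤ × ℤ)
    (hz : z.1 * d.2 = z.2 * d.1) :
    ∃ k : ℤ, z.1 = k * d.1 ∧ z.2 = k * d.2 := by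
  by_cases h1 : d.1 = 0
  · have h2 : d.2 = 1 ∨ d.2 = -1 := by
      have := hd
      rw [h1] at this
      simp [Int.gcd] at this
      omega
    have hz1 : z.1 = 0 := by
      rcases h2 with h | h <;> rw [h1, h] at hz <;> omega
    refine ⟨z.2 * d.2, by rw [h1]; omega, ?_⟩
    rcases h2 with h | h <;> rw [h] <;> ring
  · have hdvd : d.1 ∣ z.1 := by
      have hco : Int.gcd d.1 d.2 = 1 := hd
      have hzz : d.1 ∣ z.1 * d.2 := ⟨z.2, by linarith [hz]⟩
      exact Int.dvd_of_dvd_mul_right_of_gcd_one (by rwa [mul_comm] at hzz) hco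
    obtain ⟨k, hk⟩ := hdvd
    refine ⟨k, by rw [hk]; ring, ?_⟩
    have : z.2 * d.1 = k * d.2 * d.1 := by rw [← hz, hk]; ring
    exact mul_right_cancel₀ h1 this

lemma exists_root_sum (φ : AddMonoidAlgebra ℂ (ℤ × ℤ)) (hcard : 2 ≤ φ.coeff.support.card)
    (k : ℤ × ℤ → ℤ)
    (hkinj : ∀ w ∈ φ.coeff.support, ∀ w' ∈ φ.coeff.support, k w = k w' → w = w') :
    ∃ c : ℂˣ, ∑ w ∈ φ.coeff.support, φ.coeff w * ((c : ℂ)) ^ (k w) = 0 := by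
  have hne : φ.coeff.support.Nonempty := Finset.card_pos.1 (by omega)
  set N : ℤ := φ.coeff.support.sup' hne (fun w => -(k w)) with hN
  have hNk : ∀ w ∈ φ.coeff.support, 0 ≤ k w + N := by
    intro w hw
    have := Finset.le_sup' (fun w => -(k w)) hw
    omega
  set Q : Polynomial ℂ :=
    ∑ w ∈ φ.coeff.support, Polynomial.C (φ.coeff w) * Polynomial.X ^ (k w + N).toNat with hQ
  have hcoeff : ∀ w0 ∈ φ.coeff.support, Q.coeff ((k w0 + N).toNat) = φ.coeff w0 := by
    intro w0 hw0
    rw [hQ, Polynomial.finset_sum_coeff]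
    rw [Finset.sum_eq_single w0]
    · simp [Polynomial.coeff_C_mul, Polynomial.coeff_X_pow]
    · intro w hw hne'
      have : (k w + N).toNat ≠ (k w0 + N).toNat := by
        intro h
        have h1 := hNk w hw
        have h2 := hNk w0 hw0
        have : k w = k w0 := by omega
        exact hne' (hkinj w hw w0 hw0 this)
      simp only [Polynomial.coeff_C_mul, Polynomial.coeff_X_pow]
      rw [if_neg (fun h => this h.symm)]
      ring
    · intro h
      exact absurd hw0 h
  obtain ⟨w1, hw1, w2, hw2, hww⟩ := Finset.one_lt_card.1 (by omega : 1 < φ.coeff.support.card)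
  have he12 : (k w1 + N).toNat ≠ (k w2 + N).toNat := by
    intro h
    have h1 := hNk w1 hw1
    have h2 := hNk w2 hw2
    exact hww (hkinj w1 hw1 w2 hw2 (by omega))
  obtain ⟨c, hc0, hcQ⟩ := two_coeffs_root Q _ _ he12
    (by rw [hcoeff w1 hw1]; exact Finsupp.mem_support_iff.1 hw1)
    (by rw [hcoeff w2 hw2]; exact Finsupp.mem_support_iff.1 hw2)
  refine ⟨Units.mk0 c hc0, ?_⟩
  have heval : Q.eval c = (∑ w ∈ φ.coeff.support, φ.coeff w * c ^ (k w)) * c ^ N := by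
    rw [hQ, Polynomial.eval_finset_sum, Finset.sum_mul]
    apply Finset.sum_congr rfl
    intro w hw
    rw [Polynomial.eval_mul, Polynomial.eval_C, Polynomial.eval_pow, Polynomial.eval_X]
    rw [← zpow_natCast c ((k w + N).toNat), Int.toNat_of_nonneg (hNk w hw), zpow_add₀ hc0]
    ring
  rw [heval] at hcQ
  rcases mul_eq_zero.1 hcQ with h | h
  · simpa using h
  · exact absurd h (zpow_ne_zero N hc0)

lemma Ephi_zero (x0 y0 : ℂˣ) (d : ℤ × ℤ) (φ : AddMonoidAlgebra ℂ (ℤ × ℤ)) (ws : ℤ × ℤ)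
    (k : ℤ × ℤ → ℤ)
    (hk : ∀ w ∈ φ.coeff.support, w.1 = ws.1 + k w * d.1 ∧ w.2 = ws.2 + k w * d.2)
    (hsum : ∑ w ∈ φ.coeff.support, φ.coeff w * (((x0 ^ d.1 * y0 ^ d.2 : ℂˣ) : ℂ)) ^ (k w) = 0) :
    Emap x0 y0 (-d.2, d.1) φ = 0 := by
  have hrepr : φ = ∑ w ∈ φ.coeff.support, AddMonoidAlgebra.single w (φ.coeff w) := by
    conv_lhs => rw [← AddMonoidAlgebra.sum_coeff_single φ]
    rw [Finsupp.sum]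
  rw [hrepr, map_sum]
  have hterm : ∀ w ∈ φ.coeff.support,
      Emap x0 y0 (-d.2, d.1) (AddMonoidAlgebra.single w (φ.coeff w))
        = AddMonoidAlgebra.single (ws.1 * -d.2 + ws.2 * d.1)
            (((x0 ^ ws.1 * y0 ^ ws.2 : ℂˣ) : ℂ) *
              (φ.coeff w * (((x0 ^ d.1 * y0 ^ d.2 : ℂˣ) : ℂ)) ^ (k w))) := by
    intro w hw
    rw [Emap_single]
    obtain ⟨h1, h2⟩ := hk w hw
    congr 1
    · rw [h1, h2]; ring
    · rw [h1, h2]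
      push_cast
      rw [zpow_add₀ (Units.ne_zero x0), zpow_add₀ (Units.ne_zero y0), mul_zpow,
        ← zpow_mul, ← zpow_mul, mul_comm d.1 (k w), mul_comm d.2 (k w)]
      ring
  have hs : ∀ (m : ℤ) (s : Finset (ℤ × ℤ)) (f : ℤ × ℤ → ℂ),
      ∑ i ∈ s, AddMonoidAlgebra.single m (f i) = AddMonoidAlgebra.single m (∑ i ∈ s, f i) :=
    fun m s f => (map_sum (AddMonoidAlgebra.singleAddHom m) f s).symm
  rw [Finset.sum_congr rfl hterm, hs, ← Finset.mul_sum, hsum,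
    mul_zero, AddMonoidAlgebra.single_zero]

lemma max_unique1 (r W1 W2 w1 w2 : ℤ) (hr : 0 ≤ r) (h : |W2| < |W1|)
    (hw : |w1| + |w2| ≤ r) (heq : w1 * W1 + w2 * W2 = r * |W1|) :
    w2 = 0 ∧ w1 * W1 = r * |W1| := by
  have h1 : w1 * W1 ≤ |w1| * |W1| := by
    calc w1 * W1 ≤ |w1 * W1| := le_abs_self _
    _ = |w1| * |W1| := abs_mul _ _
  have h2 : w2 * W2 ≤ |w2| * |W2| := by
    calc w2 * W2 ≤ |w2 * W2| := le_abs_self _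
    _ = |w2| * |W2| := abs_mul _ _
  have h3 : |w2| * |W2| ≤ |w2| * (|W1| - 1) :=
    mul_le_mul_of_nonneg_left (by omega) (abs_nonneg _)
  have h4 : (|w1| + |w2|) * |W1| ≤ r * |W1| :=
    mul_le_mul_of_nonneg_right hw (abs_nonneg _)
  have h5 : w2 = 0 := by
    nlinarith [abs_nonneg w1, abs_nonneg w2, le_abs_self w2, neg_abs_le w2]
  refine ⟨h5, ?_⟩
  rw [h5] at heq
  linarith

lemma diag_filter1 (r : ℕ) (s : ℤ) (hs : (r : ℤ) - 1 ≤ s) (hsr : s ≤ (r : ℤ)) (hr : 2 ≤ r) :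
    ((Finset.Icc ((-(r : ℤ), -(r : ℤ)) : ℤ × ℤ) ((r : ℤ), (r : ℤ))).filter
        (fun w => |w.1| + |w.2| ≤ (r : ℤ))).filter
      (fun w => w.1 * -(-1 : ℤ) + w.2 * (1 : ℤ) = s)
    = (Finset.range (s.toNat + 1)).image (fun i : ℕ => ((i : ℤ), s - i)) := by
  ext w
  simp only [Finset.mem_filter, Finset.mem_Icc, Finset.mem_image, Finset.mem_range,
    Prod.le_def, Prod.ext_iff]
  constructor
  · rintro ⟨⟨⟨h1, h2⟩, habs⟩, hsum⟩
    rcases abs_cases w.1 with ⟨e1, s1⟩ | ⟨e1, s1⟩ <;>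
      rcases abs_cases w.2 with ⟨e2, s2⟩ | ⟨e2, s2⟩ <;>
      rw [e1, e2] at habs <;>
      exact ⟨w.1.toNat, by omega, by omega, by omega⟩
  · rintro ⟨i, hi, hw1, hw2⟩
    rcases abs_cases w.1 with ⟨e1, s1⟩ | ⟨e1, s1⟩ <;>
      rcases abs_cases w.2 with ⟨e2, s2⟩ | ⟨e2, s2⟩ <;>
      rw [e1, e2] <;>
      omega

lemma diag_filter2 (r : ℕ) (s : ℤ) (hs : (r : ℤ) - 1 ≤ s) (hsr : s ≤ (r : ℤ)) (hr : 2 ≤ r) :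
    ((Finset.Icc ((-(r : ℤ), -(r : ℤ)) : ℤ × ℤ) ((r : ℤ), (r : ℤ))).filter
        (fun w => |w.1| + |w.2| ≤ (r : ℤ))).filter
      (fun w => w.1 * -(1 : ℤ) + w.2 * (1 : ℤ) = s)
    = (Finset.range (s.toNat + 1)).image (fun i : ℕ => (-(i : ℤ), s - i)) := by
  ext w
  simp only [Finset.mem_filter, Finset.mem_Icc, Finset.mem_image, Finset.mem_range,
    Prod.le_def, Prod.ext_iff]
  constructor
  · rintro ⟨⟨⟨h1, h2⟩, habs⟩, hsum⟩
    rcases abs_cases w.1 with ⟨e1, s1⟩ | ⟨e1, s1⟩ <;>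
      rcases abs_cases w.2 with ⟨e2, s2⟩ | ⟨e2, s2⟩ <;>
      rw [e1, e2] at habs <;>
      exact ⟨(-w.1).toNat, by omega, by omega, by omega⟩
  · rintro ⟨i, hi, hw1, hw2⟩
    rcases abs_cases w.1 with ⟨e1, s1⟩ | ⟨e1, s1⟩ <;>
      rcases abs_cases w.2 with ⟨e2, s2⟩ | ⟨e2, s2⟩ <;>
      rw [e1, e2] <;>
      omega

/-- For `r ≥ 2` and any `a ∈ ℂ`, the Laurent polynomial `(Σ_{|i|+|j|≤r} x^i y^j) − a`
(the square grid `r`-neighborhood polynomial) has no line polynomial factors. -/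
theorem stmt15 (r : ℕ) (hr : 2 ≤ r) (a : ℂ)
    (φ : AddMonoidAlgebra ℂ (ℤ × ℤ)) (hφ : IsLinePoly φ) :
    ¬ φ ∣ ((∑ w ∈ (Finset.Icc ((-(r : ℤ), -(r : ℤ)) : ℤ × ℤ) ((r : ℤ), (r : ℤ))).filter
            (fun w => |w.1| + |w.2| ≤ (r : ℤ)),
          AddMonoidAlgebra.single w (1 : ℂ))
        - AddMonoidAlgebra.single ((0, 0) : ℤ × ℤ) a) := by
  intro hdvd
  obtain ⟨hcard, u, v, hv, hline⟩ := hφ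
  -- primitive, sign-normalized direction d
  obtain ⟨d, hdgcd, hdsgn, hlined⟩ :
      ∃ d : ℤ × ℤ, Int.gcd d.1 d.2 = 1 ∧ (0 < d.1 ∨ (d.1 = 0 ∧ 0 < d.2)) ∧
        ∀ w ∈ φ.coeff.support, (w.1 - u.1) * d.2 = (w.2 - u.2) * d.1 := by
    have hvne : v.1 ≠ 0 ∨ v.2 ≠ 0 := by
      by_contra h
      push_neg at h
      exact hv (Prod.ext h.1 h.2)
    have hgpos : 0 < Int.gcd v.1 v.2 := by
      rcases hvne with h | h
      · exact Int.gcd_pos_of_ne_zero_left _ h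
      · exact Int.gcd_pos_of_ne_zero_right _ h
    set g : ℤ := (Int.gcd v.1 v.2 : ℤ) with hg
    have hgne : g ≠ 0 := by positivity
    have hv1 : v.1 = g * (v.1 / g) := (Int.mul_ediv_cancel' (Int.gcd_dvd_left _ _)).symm
    have hv2 : v.2 = g * (v.2 / g) := (Int.mul_ediv_cancel' (Int.gcd_dvd_right _ _)).symm
    set d0 : ℤ × ℤ := (v.1 / g, v.2 / g) with hd0
    have hd0gcd : Int.gcd d0.1 d0.2 = 1 := Int.gcd_div_gcd_div_gcd hgpos
    have hlined0 : ∀ w ∈ φ.coeff.support, (w.1 - u.1) * d0.2 = (w.2 - u.2) * d0.1 := by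
      intro w hw
      have h := hline w hw
      rw [hv1, hv2] at h
      have h' : g * ((w.1 - u.1) * d0.2) = g * ((w.2 - u.2) * d0.1) := by
        simp only [hd0]; linarith [h]
      exact mul_left_cancel₀ hgne h'
    have hd0ne : d0.1 ≠ 0 ∨ d0.2 ≠ 0 := by
      by_contra h
      push_neg at h
      rw [h.1, h.2] at hd0gcd
      simp at hd0gcd
    by_cases hs : 0 < d0.1 ∨ (d0.1 = 0 ∧ 0 < d0.2)
    · exact ⟨d0, hd0gcd, hs, hlined0⟩
    · push_neg at hs
      refine ⟨(-d0.1, -d0.2), by simpa using hd0gcd, by omega, ?_⟩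
      intro w hw
      have := hlined0 w hw
      simp only
      linarith
  -- support base point and parametrization
  have hne : φ.coeff.support.Nonempty := Finset.card_pos.1 (by omega)
  obtain ⟨ws, hws⟩ := hne
  classical
  set kf : ℤ × ℤ → ℤ := fun w =>
    if h : ∃ kk : ℤ, w.1 - ws.1 = kk * d.1 ∧ w.2 - ws.2 = kk * d.2 then h.choose else 0
    with hkf
  have hk : ∀ w ∈ φ.coeff.support, w.1 = ws.1 + kf w * d.1 ∧ w.2 = ws.2 + kf w * d.2 := by
    intro w hw
    have hz : (w.1 - ws.1) * d.2 = (w.2 - ws.2) * d.1 := by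
      have h1 := hlined w hw
      have h2 := hlined ws hws
      linarith
    have hex : ∃ kk : ℤ, w.1 - ws.1 = kk * d.1 ∧ w.2 - ws.2 = kk * d.2 :=
      line_param_s15 d hdgcd (w.1 - ws.1, w.2 - ws.2) hz
    have hkw : kf w = hex.choose := by
      simp only [hkf]
      rw [dif_pos hex]
    exact ⟨by rw [hkw]; linarith [hex.choose_spec.1],
           by rw [hkw]; linarith [hex.choose_spec.2]⟩
  have hkinj : ∀ w ∈ φ.coeff.support, ∀ w' ∈ φ.coeff.support, kf w = kf w' → w = w' := by
    intro w hw w' hw' he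
    obtain ⟨a1, a2⟩ := hk w hw
    obtain ⟨b1, b2⟩ := hk w' hw'
    exact Prod.ext (by rw [a1, b1, he]) (by rw [a2, b2, he])
  obtain ⟨c, hsum⟩ := exists_root_sum φ hcard kf hkinj
  -- choose x0, y0 with x0^d1 * y0^d2 = c
  set x0 : ℂˣ := c ^ (Int.gcdA d.1 d.2) with hx0
  set y0 : ℂˣ := c ^ (Int.gcdB d.1 d.2) with hy0
  have hbez : d.1 * Int.gcdA d.1 d.2 + d.2 * Int.gcdB d.1 d.2 = 1 := by
    have := Int.gcd_eq_gcd_ab d.1 d.2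
    rw [hdgcd] at this
    exact_mod_cast this.symm
  have hxy : x0 ^ d.1 * y0 ^ d.2 = c := by
    rw [hx0, hy0, ← zpow_mul, ← zpow_mul, ← zpow_add,
      show Int.gcdA d.1 d.2 * d.1 + Int.gcdB d.1 d.2 * d.2 = 1 by linarith [hbez], zpow_one]
  -- E φ = 0, hence E f = 0
  have hsum' : ∑ w ∈ φ.coeff.support, φ.coeff w * (((x0 ^ d.1 * y0 ^ d.2 : ℂˣ) : ℂ)) ^ kf w = 0 := by
    rw [hxy]; exact hsum
  have hEphi := Ephi_zero x0 y0 d φ ws kf hk hsum'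
  obtain ⟨ψ, hψ⟩ := hdvd
  have hEf : Emap x0 y0 (-d.2, d.1)
      ((∑ w ∈ (Finset.Icc ((-(r : ℤ), -(r : ℤ)) : ℤ × ℤ) ((r : ℤ), (r : ℤ))).filter
            (fun w => |w.1| + |w.2| ≤ (r : ℤ)),
          AddMonoidAlgebra.single w (1 : ℂ))
        - AddMonoidAlgebra.single ((0, 0) : ℤ × ℤ) a) = 0 := by
    rw [hψ, map_mul, hEphi, zero_mul]
  -- coefficient extraction
  have hEfeval : ∀ m : ℤ, m ≠ 0 →
      ∑ w ∈ ((Finset.Icc ((-(r : ℤ), -(r : ℤ)) : ℤ × ℤ) ((r : ℤ), (r : ℤ))).filter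
            (fun w => |w.1| + |w.2| ≤ (r : ℤ))).filter
          (fun w => w.1 * -d.2 + w.2 * d.1 = m),
        ((x0 ^ w.1 * y0 ^ w.2 : ℂˣ) : ℂ) = 0 := by
    intro m hm
    have hEfeq : Emap x0 y0 (-d.2, d.1)
        ((∑ w ∈ (Finset.Icc ((-(r : ℤ), -(r : ℤ)) : ℤ × ℤ) ((r : ℤ), (r : ℤ))).filter
              (fun w => |w.1| + |w.2| ≤ (r : ℤ)),
            AddMonoidAlgebra.single w (1 : ℂ))
          - AddMonoidAlgebra.single ((0, 0) : ℤ × ℤ) a)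
        = (∑ w ∈ (Finset.Icc ((-(r : ℤ), -(r : ℤ)) : ℤ × ℤ) ((r : ℤ), (r : ℤ))).filter
              (fun w => |w.1| + |w.2| ≤ (r : ℤ)),
            AddMonoidAlgebra.single (w.1 * -d.2 + w.2 * d.1)
              ((x0 ^ w.1 * y0 ^ w.2 : ℂˣ) : ℂ))
          - AddMonoidAlgebra.single (0 : ℤ)
              (a * ((x0 ^ (0:ℤ) * y0 ^ (0:ℤ) : ℂˣ) : ℂ)) := by
      rw [map_sub, map_sum]
      congr 1
      · apply Finset.sum_congr rfl
        intro w hw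
        rw [Emap_single, one_mul]
      · rw [Emap_single]
        norm_num
    have h0 : (Emap x0 y0 (-d.2, d.1)
        ((∑ w ∈ (Finset.Icc ((-(r : ℤ), -(r : ℤ)) : ℤ × ℤ) ((r : ℤ), (r : ℤ))).filter
              (fun w => |w.1| + |w.2| ≤ (r : ℤ)),
            AddMonoidAlgebra.single w (1 : ℂ))
          - AddMonoidAlgebra.single ((0, 0) : ℤ × ℤ) a)).coeff m = 0 := by
      rw [hEf]; rfl
    rw [hEfeq, AddMonoidAlgebra.coeff_sub, Finsupp.sub_apply, AddMonoidAlgebra.coeff_sum,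
        Finset.sum_apply'] at h0
    have hsingle0 : (AddMonoidAlgebra.single (0 : ℤ)
        (a * ((x0 ^ (0:ℤ) * y0 ^ (0:ℤ) : ℂˣ) : ℂ))).coeff m = 0 := by
      rw [AddMonoidAlgebra.coeff_single, Finsupp.single_apply, if_neg (fun h => hm h.symm)]
    rw [hsingle0, sub_zero] at h0
    rw [← h0, Finset.sum_filter]
    apply Finset.sum_congr rfl
    intro w hw
    rw [AddMonoidAlgebra.coeff_single, Finsupp.single_apply]
  -- final case analysis on the direction d
  have hd1nonneg : 0 ≤ d.1 := by omega
  have hrpos : 0 < (r : ℤ) := by exact_mod_cast Nat.lt_of_lt_of_le Nat.zero_lt_two hr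
  rcases lt_trichotomy |d.2| d.1 with hcase | hcase | hcase
  · -- |d.2| < d.1 : unique maximizer (0, r)
    have hd1pos : 0 < d.1 := lt_of_le_of_lt (abs_nonneg d.2) hcase
    have hm : ((r : ℤ) * d.1) ≠ 0 := (mul_pos hrpos hd1pos).ne'
    have hfilter : ((Finset.Icc ((-(r : ℤ), -(r : ℤ)) : ℤ × ℤ) ((r : ℤ), (r : ℤ))).filter
            (fun w => |w.1| + |w.2| ≤ (r : ℤ))).filter
          (fun w => w.1 * -d.2 + w.2 * d.1 = (r : ℤ) * d.1)
        = {((0 : ℤ), (r : ℤ))} := by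
      ext w
      simp only [Finset.mem_filter, Finset.mem_Icc, Finset.mem_singleton, Prod.le_def,
        Prod.ext_iff]
      constructor
      · rintro ⟨⟨⟨⟨hb1, hb2⟩, hb3, hb4⟩, habs⟩, hdot⟩
        obtain ⟨hw1, hw2⟩ := max_unique1 (r : ℤ) d.1 (-d.2) w.2 w.1 (le_of_lt hrpos)
          (by rwa [abs_neg, abs_of_pos hd1pos])
          (by linarith)
          (by rw [abs_of_pos hd1pos]; linarith)
        refine ⟨hw1, ?_⟩
        have h2 : w.2 * d.1 = (r : ℤ) * d.1 := by rw [hw2, abs_of_pos hd1pos]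
        exact mul_right_cancel₀ (ne_of_gt hd1pos) h2
      · rintro ⟨h1, h2⟩
        refine ⟨⟨⟨⟨by omega, by omega⟩, by omega, by omega⟩, ?_⟩, ?_⟩
        · rw [h1, h2]
          simp only [abs_zero, zero_add]
          rw [abs_of_nonneg (le_of_lt hrpos)]
        · rw [h1, h2]; ring
    have h0 := hEfeval ((r : ℤ) * d.1) hm
    rw [hfilter, Finset.sum_singleton] at h0
    exact Units.ne_zero _ h0
  · -- |d.2| = d.1 : diagonal directions
    have hd1e : d.1 = 1 ∧ (d.2 = 1 ∨ d.2 = -1) := by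
      have hna : d.1.natAbs = d.2.natAbs := by
        rcases abs_cases d.2 with ⟨e, _⟩ | ⟨e, _⟩ <;> rw [e] at hcase <;> omega
      have hg2 : Nat.gcd d.1.natAbs d.2.natAbs = 1 := hdgcd
      rw [hna, Nat.gcd_self] at hg2
      rcases abs_cases d.2 with ⟨e, _⟩ | ⟨e, _⟩ <;> rw [e] at hcase <;> omega
    obtain ⟨hd1e, hd2e⟩ := hd1e
    have hAm : ((r : ℤ)) ≠ 0 := hrpos.ne'
    have hBm : ((r : ℤ) - 1) ≠ 0 := by omega
    have hA := hEfeval (r : ℤ) hAm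
    have hB := hEfeval ((r : ℤ) - 1) hBm
    simp only [hd1e] at hA hB
    have htn1 : ((r : ℤ)).toNat = r := by omega
    have htn2 : (((r : ℤ) - 1)).toNat = r - 1 := by omega
    rcases hd2e with hd2e | hd2e
    · -- d = (1, 1) : direction of the edge; W = (-1, 1)
      simp only [hd2e] at hA hB
      rw [diag_filter2 r (r : ℤ) (by omega) (by omega) hr,
        Finset.sum_image (fun i _ j _ h => by
          have := congrArg Prod.fst h
          simp only [neg_inj, Nat.cast_inj] at this
          exact this)] at hA
      rw [diag_filter2 r ((r : ℤ) - 1) (by omega) (by omega) hr,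
        Finset.sum_image (fun i _ j _ h => by
          have := congrArg Prod.fst h
          simp only [neg_inj, Nat.cast_inj] at this
          exact this)] at hB
      rw [htn1] at hA
      rw [htn2, show r - 1 + 1 = r from by omega] at hB
      simp only [Units.val_mul, Units.val_zpow_eq_zpow_val] at hA hB
      have hkey : ∑ i ∈ Finset.range (r + 1),
          ((x0 : ℂ)) ^ (-(i : ℤ)) * ((y0 : ℂ)) ^ ((r : ℤ) - (i : ℤ))
          = (∑ i ∈ Finset.range r,
              ((x0 : ℂ)) ^ (-(1 : ℤ)) *
                (((x0 : ℂ)) ^ (-(i : ℤ)) * ((y0 : ℂ)) ^ (((r : ℤ) - 1) - (i : ℤ))))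
            + ((y0 : ℂ)) ^ ((r : ℤ)) := by
        rw [Finset.sum_range_succ']
        congr 1
        · apply Finset.sum_congr rfl
          intro i hi
          push_cast
          rw [show -((i : ℤ) + 1) = (-1) + (-(i : ℤ)) by ring, zpow_add₀ (Units.ne_zero x0),
            show (r : ℤ) - ((i : ℤ) + 1) = ((r : ℤ) - 1) - (i : ℤ) by ring]
          ring
        · norm_num
      rw [hkey, ← Finset.mul_sum, hB, mul_zero, zero_add] at hA
      exact zpow_ne_zero _ (Units.ne_zero y0) hA
    · -- d = (1, -1) : other diagonal; W = (1, 1)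
      simp only [hd2e] at hA hB
      rw [diag_filter1 r (r : ℤ) (by omega) (by omega) hr,
        Finset.sum_image (fun i _ j _ h => by
          have := congrArg Prod.fst h
          simp only [Nat.cast_inj] at this
          exact this)] at hA
      rw [diag_filter1 r ((r : ℤ) - 1) (by omega) (by omega) hr,
        Finset.sum_image (fun i _ j _ h => by
          have := congrArg Prod.fst h
          simp only [Nat.cast_inj] at this
          exact this)] at hB
      rw [htn1] at hA
      rw [htn2, show r - 1 + 1 = r from by omega] at hB
      simp only [Units.val_mul, Units.val_zpow_eq_zpow_val] at hA hB
      have hkey : ∑ i ∈ Finset.range (r + 1),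
          ((x0 : ℂ)) ^ ((i : ℤ)) * ((y0 : ℂ)) ^ ((r : ℤ) - (i : ℤ))
          = (∑ i ∈ Finset.range r,
              ((y0 : ℂ)) ^ ((1 : ℤ)) *
                (((x0 : ℂ)) ^ ((i : ℤ)) * ((y0 : ℂ)) ^ (((r : ℤ) - 1) - (i : ℤ))))
            + ((x0 : ℂ)) ^ ((r : ℤ)) := by
        rw [Finset.sum_range_succ]
        congr 1
        · apply Finset.sum_congr rfl
          intro i hi
          rw [show (r : ℤ) - (i : ℤ) = 1 + (((r : ℤ) - 1) - (i : ℤ)) by ring,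
            zpow_add₀ (Units.ne_zero y0)]
          ring
        · norm_num
      rw [hkey, ← Finset.mul_sum, hB, mul_zero, zero_add] at hA
      exact zpow_ne_zero _ (Units.ne_zero x0) hA
  · -- d.1 < |d.2| : unique maximizer (∓r, 0)
    have hd2ne : d.2 ≠ 0 := by
      intro h
      rw [h] at hcase
      simp at hcase
      omega
    rcases hd2ne.lt_or_gt with hneg | hpos
    · -- d.2 < 0 : maximizer (r, 0), m = r * (-d.2)
      have habs2 : |(-d.2)| = -d.2 := abs_of_pos (by omega)
      have hm : ((r : ℤ) * (-d.2)) ≠ 0 := (mul_pos hrpos (by omega)).ne'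
      have hfilter : ((Finset.Icc ((-(r : ℤ), -(r : ℤ)) : ℤ × ℤ) ((r : ℤ), (r : ℤ))).filter
              (fun w => |w.1| + |w.2| ≤ (r : ℤ))).filter
            (fun w => w.1 * -d.2 + w.2 * d.1 = (r : ℤ) * (-d.2))
          = {((r : ℤ), (0 : ℤ))} := by
        ext w
        simp only [Finset.mem_filter, Finset.mem_Icc, Finset.mem_singleton, Prod.le_def,
          Prod.ext_iff]
        constructor
        · rintro ⟨⟨⟨⟨hb1, hb2⟩, hb3, hb4⟩, habs⟩, hdot⟩
          obtain ⟨hw2, hw1⟩ := max_unique1 (r : ℤ) (-d.2) d.1 w.1 w.2 (le_of_lt hrpos)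
            (by rw [habs2, abs_of_nonneg hd1nonneg]; rcases abs_cases d.2 with ⟨e, _⟩ | ⟨e, _⟩ <;> omega)
            habs
            (by rw [habs2]; linarith)
          refine ⟨?_, hw2⟩
          rw [habs2] at hw1
          exact mul_right_cancel₀ (show (-d.2) ≠ 0 by omega) hw1
        · rintro ⟨h1, h2⟩
          refine ⟨⟨⟨⟨by omega, by omega⟩, by omega, by omega⟩, ?_⟩, ?_⟩
          · rw [h1, h2]
            simp only [abs_zero, add_zero]
            rw [abs_of_nonneg (le_of_lt hrpos)]
          · rw [h1, h2]; ring
      have h0 := hEfeval ((r : ℤ) * (-d.2)) hm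
      rw [hfilter, Finset.sum_singleton] at h0
      exact Units.ne_zero _ h0
    · -- d.2 > 0 : maximizer (-r, 0), m = r * d.2
      have habs2 : |(-d.2)| = d.2 := by rw [abs_neg]; exact abs_of_pos hpos
      have hm : ((r : ℤ) * d.2) ≠ 0 := (mul_pos hrpos hpos).ne'
      have hfilter : ((Finset.Icc ((-(r : ℤ), -(r : ℤ)) : ℤ × ℤ) ((r : ℤ), (r : ℤ))).filter
              (fun w => |w.1| + |w.2| ≤ (r : ℤ))).filter
            (fun w => w.1 * -d.2 + w.2 * d.1 = (r : ℤ) * d.2)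
          = {((-(r : ℤ)), (0 : ℤ))} := by
        ext w
        simp only [Finset.mem_filter, Finset.mem_Icc, Finset.mem_singleton, Prod.le_def,
          Prod.ext_iff]
        constructor
        · rintro ⟨⟨⟨⟨hb1, hb2⟩, hb3, hb4⟩, habs⟩, hdot⟩
          obtain ⟨hw2, hw1⟩ := max_unique1 (r : ℤ) (-d.2) d.1 w.1 w.2 (le_of_lt hrpos)
            (by rw [habs2, abs_of_nonneg hd1nonneg]; rcases abs_cases d.2 with ⟨e, _⟩ | ⟨e, _⟩ <;> omega)
            habs
            (by rw [habs2]; linarith)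
          refine ⟨?_, hw2⟩
          rw [habs2] at hw1
          have : w.1 * -d.2 = (-(r : ℤ)) * -d.2 := by rw [hw1]; ring
          exact mul_right_cancel₀ (show (-d.2) ≠ 0 by omega) this
        · rintro ⟨h1, h2⟩
          refine ⟨⟨⟨⟨by omega, by omega⟩, by omega, by omega⟩, ?_⟩, ?_⟩
          · rw [h1, h2]
            simp only [abs_zero, add_zero, abs_neg]
            rw [abs_of_nonneg (le_of_lt hrpos)]
          · rw [h1, h2]; ring
      have h0 := hEfeval ((r : ℤ) * d.2) hm
      rw [hfilter, Finset.sum_singleton] at h0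
      exact Units.ne_zero _ h0
end

section
/- Let c : ℤ^d → {e_1,...,e_n} be the vector presentation of a D-perfect coloring with matrix B, and let p be a prime. Then for every k ≥ 1, the Laurent polynomial Σ_{v∈D} I·X^{−p^k v} − B^{p^k} annihilates c modulo p, i.e., (Σ_{v∈D} c(u + p^k v)) ≡ B^{p^k} c(u) (mod p) for all u ∈ ℤ^d. -/
/-- Let `c : ℤ^d → {e_1,...,e_n}` be the vector presentation of a `D`-perfect coloring
with matrix `B`, and `p` a prime. Then for every `k ≥ 1`, the Laurent polynomial
`Σ_{v∈D} I·X^{−p^k v} − B^{p^k}` annihilates `c` modulo `p`: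
`Σ_{v∈D} c(u + p^k·v) ≡ B^{p^k}·c(u) (mod p)` componentwise. -/
theorem stmt17 (d n : ℕ) (p : ℕ) (hp : p.Prime) (D : Finset (Fin d → ℤ))
    (B : Matrix (Fin n) (Fin n) ℤ) (c : (Fin d → ℤ) → (Fin n → ℤ))
    (hc : ∀ u, ∃ j, c u = Pi.single j 1)
    (hperf : ∀ u j, c u = Pi.single j 1 → ∀ i,
      ((D.filter (fun v => c (u + v) = Pi.single i 1)).card : ℤ) = B i j) :
    ∀ k : ℕ, 1 ≤ k → ∀ (u : Fin d → ℤ) (i : Fin n),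
      (∑ v ∈ D, c (u + ((p : ℤ) ^ k) • v)) i ≡ ((B ^ (p ^ k)).mulVec (c u)) i
        [ZMOD (p : ℤ)] := by
  classical
  intro k _hk u i
  haveI : Fact p.Prime := ⟨hp⟩
  -- base identity over ℤ
  have base : ∀ w, ∑ v ∈ D, c (w + v) = B.mulVec (c w) := by
    intro w
    obtain ⟨j, hj⟩ := hc w
    funext i'
    have hrhs : B.mulVec (c w) i' = B i' j := by
      rw [hj]
      rw [show (Pi.single j 1 : Fin n → ℤ) = Pi.single j (1:ℤ) from rfl,
        Matrix.mulVec_single]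
      simp
    rw [Finset.sum_apply, hrhs, ← hperf w j hj i']
    have key : ∀ v ∈ D, c (w + v) i' = if c (w + v) = Pi.single i' 1 then 1 else 0 := by
      intro v _
      obtain ⟨j', hj'⟩ := hc (w + v)
      by_cases h : j' = i'
      · subst h
        rw [if_pos hj', hj', Pi.single_eq_same]
      · rw [hj', Pi.single_apply, if_neg (fun hh => h hh.symm), if_neg]
        intro hcontra
        apply h
        have := congrFun hcontra j'
        simp only [Pi.single_eq_same, Pi.single_apply] at this
        by_contra h'
        rw [if_neg h'] at this
        exact one_ne_zero this
    rw [Finset.sum_congr rfl key, Finset.card_filter]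
    push_cast
    rfl
  -- reduce mod p
  let cb : (Fin d → ℤ) → (Fin n → ZMod p) := fun w i' => ((c w i' : ℤ) : ZMod p)
  let Bb : Matrix (Fin n) (Fin n) (ZMod p) := B.map (Int.cast : ℤ → ZMod p)
  have castvec : ∀ (M : Matrix (Fin n) (Fin n) ℤ) (x : Fin n → ℤ) (i' : Fin n),
      (((M.mulVec x) i' : ℤ) : ZMod p)
        = ((M.map (Int.cast : ℤ → ZMod p)).mulVec (fun j => ((x j : ℤ) : ZMod p))) i' := by
    intro M x i'
    simp [Matrix.mulVec, dotProduct]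
  have baseb : ∀ w, ∑ v ∈ D, cb (w + v) = Bb.mulVec (cb w) := by
    intro w
    funext i'
    rw [Finset.sum_apply]
    have : ∀ v ∈ D, cb (w + v) i' = ((c (w + v) i' : ℤ) : ZMod p) := fun _ _ => rfl
    rw [Finset.sum_congr rfl this, ← Int.cast_sum, ← Finset.sum_apply, base w, castvec]
  -- the group algebra
  let S := AddMonoidAlgebra (ZMod p) (Fin d → ℤ)
  let φ : (Fin d → ℤ) → (S →+ (Fin n → ZMod p)) := fun w =>
    AddMonoidHom.mk' (fun s => s.coeff.sum fun g r => r • cb (w + g))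
      (fun s t => Finsupp.sum_add_index' (fun _ => zero_smul _ _)
        (fun _ b₁ b₂ => add_smul b₁ b₂ _))
  have φ_single : ∀ w g (r : ZMod p),
      φ w (AddMonoidAlgebra.single g r) = r • cb (w + g) := by
    intro w g r
    show (AddMonoidAlgebra.single g r).coeff.sum (fun g r => r • cb (w + g)) = r • cb (w + g)
    exact Finsupp.sum_single_index (zero_smul _ _)
  have φ_mul_single : ∀ w v (s : S),
      φ w (s * AddMonoidAlgebra.single v 1) = φ (w + v) s := by
    intro w v s
    induction s using AddMonoidAlgebra.induction_linear with
    | zero => simp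
    | add f g hf hg => rw [add_mul, map_add, hf, hg, map_add]
    | single g r =>
      rw [AddMonoidAlgebra.single_mul_single, mul_one, φ_single, φ_single]
      congr 1
      rw [add_comm g v, ← add_assoc]
  let ac : S := ∑ v ∈ D, AddMonoidAlgebra.single v (1 : ZMod p)
  have claim : ∀ m w, φ w (ac ^ m) = (Bb ^ m).mulVec (cb w) := by
    intro m
    induction m with
    | zero =>
      intro w
      rw [pow_zero, pow_zero, Matrix.one_mulVec,
        show (1 : S) = AddMonoidAlgebra.single 0 1 from rfl, φ_single, one_smul, add_zero]
    | succ m ih =>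
      intro w
      rw [pow_succ, show ac = ∑ v ∈ D, AddMonoidAlgebra.single v (1 : ZMod p) from rfl,
        Finset.mul_sum, map_sum]
      have : ∀ v ∈ D, φ w (ac ^ m * AddMonoidAlgebra.single v 1)
          = (Bb ^ m).mulVec (cb (w + v)) := by
        intro v _
        rw [φ_mul_single, ih]
      rw [Finset.sum_congr rfl this]
      have hsum : ∑ v ∈ D, (Bb ^ m).mulVec (cb (w + v))
          = (Bb ^ m).mulVec (∑ v ∈ D, cb (w + v)) := by
        funext i'
        rw [Finset.sum_apply]
        simp only [Matrix.mulVec, dotProduct, Finset.sum_apply, Finset.mul_sum]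
        exact Finset.sum_comm
      rw [hsum, baseb, Matrix.mulVec_mulVec, ← pow_succ]
  -- characteristic p and Frobenius
  haveI : CharP S p := by
    refine charP_of_injective_algebraMap (R := ZMod p) ?_ p
    rw [AddMonoidAlgebra.coe_algebraMap]
    exact (AddMonoidAlgebra.ofCoeff_injective.comp (Finsupp.single_injective 0)).comp (fun a b h => by simpa using h)
  haveI : ExpChar S p := ExpChar.prime hp
  have frob : ac ^ (p ^ k) = ∑ v ∈ D, AddMonoidAlgebra.single ((p ^ k) • v) (1 : ZMod p) := by
    rw [show ac = ∑ v ∈ D, AddMonoidAlgebra.single v (1 : ZMod p) from rfl,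
      sum_pow_char_pow]
    refine Finset.sum_congr rfl fun v _ => ?_
    rw [AddMonoidAlgebra.single_pow, one_pow]
  have final : ∑ v ∈ D, cb (u + (p ^ k) • v) = (Bb ^ (p ^ k)).mulVec (cb u) := by
    have h1 := claim (p ^ k) u
    rw [frob, map_sum] at h1
    rw [← h1]
    refine Finset.sum_congr rfl fun v _ => ?_
    rw [φ_single, one_smul]
  -- conclude
  rw [← ZMod.intCast_eq_intCast_iff]
  have hsmul : ∀ v : Fin d → ℤ, ((p : ℤ) ^ k) • v = (p ^ k : ℕ) • v := by
    intro v
    rw [← natCast_zsmul]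
    norm_cast
  calc ((( ∑ v ∈ D, c (u + ((p : ℤ) ^ k) • v)) i : ℤ) : ZMod p)
      = ∑ v ∈ D, cb (u + (p ^ k : ℕ) • v) i := by
        rw [Finset.sum_apply]
        push_cast
        exact Finset.sum_congr rfl fun v _ => by rw [hsmul v]
    _ = (Bb ^ (p ^ k)).mulVec (cb u) i := by rw [← Finset.sum_apply, final]
    _ = (((B ^ (p ^ k)).mulVec (c u)) i : ZMod p) := by
        have hBpow : (B ^ (p ^ k)).map (Int.cast : ℤ → ZMod p) = Bb ^ (p ^ k) := by
          have h2 := map_pow ((Int.castRingHom (ZMod p)).mapMatrix) B (p ^ k)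
          rw [RingHom.mapMatrix_apply, RingHom.mapMatrix_apply] at h2
          exact h2
        rw [castvec, hBpow]
end

section
/- Let F ⊆ ℤ be a finite nonempty set and C ⊆ ℤ a set such that every integer has a unique representation as f + c with f ∈ F, c ∈ C (a translational tiling of ℤ by F). Then C is periodic: there exists k ≥ 1 with C + k = C. -/
/-! Fix `g ∈ F`. Then `n ∈ C` exactly when none of the points `n + g - f` (`f ∈ F`, `f ≠ g`) lies
in `C`: otherwise `n + g` would have two representations. Taking `g = min F`, resp. `g = max F`,
membership of `n` in `C` is decided by the `D = max F - min F` points just before, resp. just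
after, `n`. Among the finitely many patterns of a window of length `D`, some pattern occurs at two
positions `p` and `p + k`; propagating forward and backward, `x ∈ C ↔ x + k ∈ C` for every `x`. -/

def IsTiling {G : Type*} [AddCommGroup G] (F C : Set G) : Prop :=
  ∀ m : G, ∃! fc : G × G, fc.1 ∈ F ∧ fc.2 ∈ C ∧ fc.1 + fc.2 = m

namespace IsTiling

section AddCommGroup

variable {G : Type*} [AddCommGroup G] {F C : Set G}

theorem eq_of_add_eq (h : IsTiling F C) {f f' c c' : G} (hf : f ∈ F) (hf' : f' ∈ F)
    (hc : c ∈ C) (hc' : c' ∈ C) (heq : f + c = f' + c') : c = c' := by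
  obtain ⟨_, -, huniq⟩ := h (f + c)
  have h₁ := huniq (f, c) ⟨hf, hc, rfl⟩
  have h₂ := huniq (f', c') ⟨hf', hc', heq.symm⟩
  exact congrArg Prod.snd (h₁.trans h₂.symm)

theorem mem_iff_forall_notMem (h : IsTiling F C) {g : G} (hg : g ∈ F) (n : G) :
    n ∈ C ↔ ∀ f ∈ F, f ≠ g → n + g - f ∉ C := by
  constructor
  · intro hn f hf hfg hc
    have : n = n + g - f := h.eq_of_add_eq hg hf hn hc (by abel)
    rw [eq_sub_iff_add_eq, add_left_cancel_iff] at this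
    exact hfg this
  · intro hforall
    by_contra hn
    obtain ⟨⟨f, c⟩, ⟨hf, hc, hsum : f + c = n + g⟩, -⟩ := h (n + g)
    have hfg : f ≠ g := by
      rintro rfl
      rw [add_comm n, add_left_cancel_iff] at hsum
      exact hn (hsum ▸ hc)
    exact hforall f hf hfg (by rwa [← hsum, add_sub_cancel_left])

theorem mem_iff_mem_of_agree (h : IsTiling F C) {g : G} (hg : g ∈ F) {n m : G}
    (hnm : ∀ f ∈ F, f ≠ g → (n + g - f ∈ C ↔ m + g - f ∈ C)) : n ∈ C ↔ m ∈ C := by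
  rw [h.mem_iff_forall_notMem hg, h.mem_iff_forall_notMem hg]
  exact forall₂_congr fun f hf => imp_congr_right fun hfg => not_congr (hnm f hf hfg)

end AddCommGroup

variable {F C : Set ℤ} {D : ℕ} {n m : ℤ}

theorem mem_iff_mem_of_agree_before (h : IsTiling F C) {a : ℤ} (ha : a ∈ F)
    (hF : F ⊆ Set.Icc a (a + D)) (hnm : ∀ i : ℤ, 0 < i → i ≤ D → (n - i ∈ C ↔ m - i ∈ C)) :
    n ∈ C ↔ m ∈ C := by
  refine h.mem_iff_mem_of_agree ha fun f hf hfa => ?_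
  obtain ⟨haf, hfD⟩ := hF hf
  rw [add_sub_assoc, add_sub_assoc, ← neg_sub f a, ← sub_eq_add_neg, ← sub_eq_add_neg]
  exact hnm (f - a) (by omega) (by omega)

theorem mem_iff_mem_of_agree_after (h : IsTiling F C) {b : ℤ} (hb : b ∈ F)
    (hF : F ⊆ Set.Icc (b - D) b) (hnm : ∀ i : ℤ, 0 < i → i ≤ D → (n + i ∈ C ↔ m + i ∈ C)) :
    n ∈ C ↔ m ∈ C := by
  refine h.mem_iff_mem_of_agree hb fun f hf hfb => ?_
  obtain ⟨hDf, hfb'⟩ := hF hf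
  rw [add_sub_assoc, add_sub_assoc]
  exact hnm (b - f) (by omega) (by omega)

end IsTiling

namespace Int

variable {P : ℤ → Prop} {D : ℕ} {p : ℤ}

theorem forall_ge_of_window (hwin : ∀ i : ℕ, i < D → P (p + i))
    (hstep : ∀ n, (∀ i : ℤ, 0 < i → i ≤ D → P (n - i)) → P n) : ∀ x, p ≤ x → P x := by
  suffices ∀ j : ℕ, ∀ x, p ≤ x → x < p + D + j → P x from
    fun x hx => this ((x - p).toNat + 1) x hx (by omega)
  intro j
  induction j with
  | zero =>
    intro x hpx hx
    have := hwin (x - p).toNat (by omega)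
    rwa [show p + ((x - p).toNat : ℤ) = x by omega] at this
  | succ j ih =>
    intro x hpx hx
    rcases lt_or_ge x (p + D + j) with hx' | hx'
    · exact ih x hpx hx'
    · exact hstep x fun i hi hiD => ih _ (by omega) (by omega)

theorem forall_of_window (hwin : ∀ i : ℕ, i < D → P (p + i))
    (hpast : ∀ n, (∀ i : ℤ, 0 < i → i ≤ D → P (n - i)) → P n)
    (hfuture : ∀ n, (∀ i : ℤ, 0 < i → i ≤ D → P (n + i)) → P n) : ∀ x, P x := by
  have hge := forall_ge_of_window hwin hpast
  have hle := forall_ge_of_window (P := fun x => P (-x)) (D := D) (p := 1 - (p + D))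
    (fun i hi => by convert hwin (D - 1 - i) (by omega) using 2; omega)
    (fun n hn => hfuture (-n) fun i hi hiD => by convert hn i hi hiD using 2; ring)
  intro x
  rcases le_or_gt p x with hx | hx
  · exact hge x hx
  · simpa using hle (-x) (by omega)

theorem exists_repeated_window (S : Set ℤ) (D : ℕ) :
    ∃ p : ℤ, ∃ k : ℕ, 0 < k ∧ ∀ i : ℕ, i < D → (p + i ∈ S ↔ p + i + k ∈ S) := by
  obtain ⟨a, b, hab, heq⟩ := Set.finite_univ.exists_lt_map_eq_of_forall_mem
    (f := fun a : ℕ => {i : Fin D | (a + i : ℤ) ∈ S}) fun _ => Set.mem_univ _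
  refine ⟨a, b - a, by omega, fun i hi => ?_⟩
  rw [show (a : ℤ) + i + ((b - a : ℕ) : ℤ) = b + i by omega]
  exact Set.ext_iff.mp heq ⟨i, hi⟩

end Int

/-- One-dimensional periodic tiling theorem: if a finite nonempty tile `F ⊆ ℤ` tiles `ℤ`
by the translation set `C` (every integer has a unique representation `f + c` with
`f ∈ F`, `c ∈ C`), then `C` is periodic. -/
theorem stmt18 (F : Finset ℤ) (hF : F.Nonempty) (C : Set ℤ)
    (htile : ∀ m : ℤ, ∃! fc : ℤ × ℤ, fc.1 ∈ F ∧ fc.2 ∈ C ∧ fc.1 + fc.2 = m) :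
    ∃ k : ℕ, 1 ≤ k ∧ ∀ x : ℤ, x ∈ C ↔ x + k ∈ C := by
  set a := F.min' hF
  set b := F.max' hF
  set D := (b - a).toNat
  have htile' : IsTiling (F : Set ℤ) C := htile
  have hFa : (F : Set ℤ) ⊆ Set.Icc a (a + D) := fun f hf => by
    have := F.min'_le f hf; have := F.le_max' f hf; exact ⟨by omega, by omega⟩
  have hFb : (F : Set ℤ) ⊆ Set.Icc (b - D) b := fun f hf => by
    have := F.min'_le f hf; have := F.le_max' f hf; exact ⟨by omega, by omega⟩
  obtain ⟨p, k, hk, hwin⟩ := Int.exists_repeated_window C D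
  refine ⟨k, hk, Int.forall_of_window hwin (fun n hn => ?_) (fun n hn => ?_)⟩
  · refine htile'.mem_iff_mem_of_agree_before (F.min'_mem hF) hFa fun i hi hiD => ?_
    rw [add_sub_right_comm]
    exact hn i hi hiD
  · refine htile'.mem_iff_mem_of_agree_after (F.max'_mem hF) hFb fun i hi hiD => ?_
    rw [add_right_comm]
    exact hn i hi hiD
end
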